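/- arXiv:1012.2071 — 4 statements merged into one kernel-verified Lean document; each statement's English description precedes it below -/
import Mathlib

section
/- Let n be a positive integer and Θ a real n×1 matrix (a column of n real numbers). Then β_×(Θ) ≥ β(Θ) ≥ (n·β_×(Θ) − 1) / (n(n−1)·β_×(Θ) + n² − n + 1), where if β_×(Θ) = +∞ the lower bound is interpreted as 1/(n(n−1)) when n ≥ 2 and as +∞ when n = 1. -/
open MeasureTheory Filter Matrix

noncomputable section

/-- Geometric mean of the absolute values of the coordinates: Π(z). -/
def Pigeo {k : ℕ} (z : Fin k → ℝ) : ℝ := (∏ i, |z i|) ^ ((1:ℝ)/k)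

/-- Geometric mean of `max 1 |z i|`: Π'(z). -/
def Pigeo' {k : ℕ} (z : Fin k → ℝ) : ℝ := (∏ i, max 1 |z i|) ^ ((1:ℝ)/k)

/-- Coordinatewise cast of an integer vector to a real vector. -/
def ivec {k : ℕ} (x : Fin k → ℤ) : Fin k → ℝ := fun i => (x i : ℝ)

/-- The constant Δ_d = (2^{d-1}√d)⁻¹ · vol_{d-1}{x ∈ [-1,1]^d : x₁+⋯+x_d = 0}. -/
def Delta (d : ℕ) : ℝ :=
  ((2:ℝ) ^ (d - 1) * Real.sqrt d)⁻¹ *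
    (μH[(d:ℝ) - 1] {x : EuclideanSpace ℝ (Fin d) | (∀ i, |x i| ≤ 1) ∧ ∑ i, x i = 0}).toReal

/-- There are infinitely many pairs x ∈ ℤ^m \ {0}, y ∈ ℤ^n with Π(Θx − y) ≤ Π'(x)^{−γ}. -/
def MultApprox (n m : ℕ) (Θ : Matrix (Fin n) (Fin m) ℝ) (γ : ℝ) : Prop :=
  {p : (Fin m → ℤ) × (Fin n → ℤ) | p.1 ≠ 0 ∧
    Pigeo (Θ.mulVec (ivec p.1) - ivec p.2) ≤ Pigeo' (ivec p.1) ^ (-γ)}.Infinite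

/-- The multiplicative Diophantine exponent β_×(Θ), as an extended real number. -/
def mbeta (n m : ℕ) (Θ : Matrix (Fin n) (Fin m) ℝ) : EReal :=
  sSup {x : EReal | ∃ γ : ℝ, x = (γ : EReal) ∧ MultApprox n m Θ γ}

/-- There are infinitely many pairs x ∈ ℤ^m, y ∈ ℤ^n with |Θx − y|_∞ ≤ |x|_∞^{−γ}. -/
def OrdApprox (n m : ℕ) (Θ : Matrix (Fin n) (Fin m) ℝ) (γ : ℝ) : Prop :=
  {p : (Fin m → ℤ) × (Fin n → ℤ) |
    ‖Θ.mulVec (ivec p.1) - ivec p.2‖ ≤ ‖ivec p.1‖ ^ (-γ)}.Infinite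

/-- The ordinary Diophantine exponent β(Θ), as an extended real number. -/
def obeta (n m : ℕ) (Θ : Matrix (Fin n) (Fin m) ℝ) : EReal :=
  sSup {x : EReal | ∃ γ : ℝ, x = (γ : EReal) ∧ OrdApprox n m Θ γ}

/-!
`β ≤ β_×` because the geometric mean of the coordinates is at most their maximum.

For the lower bound, if `β_× < ∞` then no `x θᵢ` is an integer, so each denominator `x` carries
only finitely many multiplicative approximations, and these occur with arbitrarily large
`|x| = T`. Such an approximation has a coordinate with `|x θᵢ₀ - yᵢ₀| ≤ T ^ (-γ)`, and
Dirichlet's box principle at scale `T ^ (γ / n)` on the other `n - 1` coordinates turns it into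
an ordinary approximation of exponent close to `γ / ((n - 1) γ + n)`, which beats the stated
bound. If `β_× = ∞`, Dirichlet's `β ≥ 1 / n` suffices for `n ≥ 2`, and for `n = 1` the two
exponents agree.
-/

lemma pigeo_nonneg {k : ℕ} (z : Fin k → ℝ) : 0 ≤ Pigeo z :=
  Real.rpow_nonneg (Finset.prod_nonneg fun _ _ => abs_nonneg _) _

lemma one_le_pigeo' {k : ℕ} (z : Fin k → ℝ) : 1 ≤ Pigeo' z :=
  Real.one_le_rpow (Finset.one_le_prod fun _ _ => le_max_left _ _) (by positivity)

lemma pigeo_pow {k : ℕ} (hk : 0 < k) (z : Fin k → ℝ) : Pigeo z ^ k = ∏ i, |z i| := by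
  rw [Pigeo, ← Real.rpow_natCast, ← Real.rpow_mul (Finset.prod_nonneg fun _ _ => abs_nonneg _),
    one_div_mul_cancel (by positivity), Real.rpow_one]

lemma pigeo_eq_zero_of_apply_eq_zero {k : ℕ} {z : Fin k → ℝ} (i : Fin k) (hi : z i = 0) :
    Pigeo z = 0 := by
  rw [Pigeo, Finset.prod_eq_zero (Finset.mem_univ i) (by rw [hi, abs_zero]),
    Real.zero_rpow (by have := i.pos; positivity)]

lemma prod_abs_le_pow_of_pigeo_le {k : ℕ} (hk : 0 < k) {z : Fin k → ℝ} {B : ℝ}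
    (h : Pigeo z ≤ B) : ∏ i, |z i| ≤ B ^ k :=
  pigeo_pow hk z ▸ pow_le_pow_left₀ (pigeo_nonneg z) h k

lemma pigeo_le_norm {k : ℕ} (hk : 0 < k) (z : Fin k → ℝ) : Pigeo z ≤ ‖z‖ := by
  refine (pow_le_pow_iff_left₀ (pigeo_nonneg z) (norm_nonneg z) hk.ne').1 ?_
  rw [pigeo_pow hk]
  calc ∏ i, |z i| ≤ ∏ _i : Fin k, ‖z‖ :=
        Finset.prod_le_prod (fun _ _ => abs_nonneg _) fun i _ => norm_le_pi_norm z i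
    _ = ‖z‖ ^ k := by simp

lemma exists_abs_le_pigeo {k : ℕ} (hk : 0 < k) (z : Fin k → ℝ) : ∃ i, |z i| ≤ Pigeo z := by
  obtain ⟨i, -, hi⟩ := Finset.exists_min_image Finset.univ (fun i => |z i|)
    (Finset.univ_nonempty_iff.2 ⟨⟨0, hk⟩⟩)
  refine ⟨i, (pow_le_pow_iff_left₀ (abs_nonneg _) (pigeo_nonneg z) hk.ne').1 ?_⟩
  rw [pigeo_pow hk]
  calc |z i| ^ k = ∏ _j : Fin k, |z i| := by simp
    _ ≤ ∏ j, |z j| :=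
        Finset.prod_le_prod (fun _ _ => abs_nonneg _) fun j _ => hi j (Finset.mem_univ j)

lemma Int.finite_setOf_abs_sub_le (a R : ℝ) : {z : ℤ | |a - z| ≤ R}.Finite :=
  (Set.finite_Icc ⌈a - R⌉ ⌊a + R⌋).subset fun z hz => by
    obtain ⟨h₁, h₂⟩ := abs_le.1 (show |a - z| ≤ R from hz)
    exact ⟨Int.ceil_le.2 (by linarith), Int.le_floor.2 (by linarith)⟩

/-- Each factor is at least the positive distance from `a j` to `ℤ`, which bounds every single
factor in terms of `c`. -/
lemma finite_setOf_prod_abs_sub_le {ι : Type*} [Fintype ι] [DecidableEq ι] {a : ι → ℝ}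
    (ha : ∀ i (z : ℤ), a i ≠ z) (c : ℝ) : {y : ι → ℤ | ∏ i, |a i - y i| ≤ c}.Finite := by
  set d : ι → ℝ := fun j => |a j - round (a j)|
  have hd : ∀ j, 0 < d j := fun j => abs_pos.2 (sub_ne_zero.2 (ha j _))
  set D : ι → ℝ := fun i => ∏ j ∈ Finset.univ.erase i, d j
  have hD : ∀ i, 0 < D i := fun i => Finset.prod_pos fun j _ => hd j
  refine (Set.Finite.pi fun i => Int.finite_setOf_abs_sub_le (a i) (c / D i)).subset ?_
  intro y hy i _
  change |a i - y i| ≤ c / D i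
  rw [le_div_iff₀ (hD i)]
  calc |a i - y i| * D i ≤ |a i - y i| * ∏ j ∈ Finset.univ.erase i, |a j - y j| :=
        mul_le_mul_of_nonneg_left (Finset.prod_le_prod (fun j _ => (hd j).le)
          fun j _ => round_le _ _) (abs_nonneg _)
    _ = ∏ j, |a j - y j| := Finset.mul_prod_erase _ (fun j => |a j - y j|) (Finset.mem_univ i)
    _ ≤ c := hy

section ColumnVectors

variable {n : ℕ} (Θ : Matrix (Fin n) (Fin 1) ℝ)

lemma mulVec_ivec_apply (x : Fin 1 → ℤ) (i : Fin n) : Θ.mulVec (ivec x) i = Θ i 0 * x 0 := by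
  simp [Matrix.mulVec, dotProduct, ivec]

lemma norm_fin_one (z : Fin 1 → ℝ) : ‖z‖ = |z 0| := by
  rw [← Real.norm_eq_abs, ← pi_norm_const (ι := Fin 1) (z 0)]
  exact congrArg norm (funext fun i => by rw [Subsingleton.elim i 0])

lemma norm_ivec_fin_one (x : Fin 1 → ℤ) : ‖ivec x‖ = |(x 0 : ℝ)| :=
  norm_fin_one _

lemma apply_zero_ne_zero_of_ne_zero {x : Fin 1 → ℤ} (hx : x ≠ 0) : x 0 ≠ 0 :=
  fun h => hx (funext fun i => by rw [Subsingleton.elim i 0, h]; rfl)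

lemma pigeo'_ivec_fin_one {x : Fin 1 → ℤ} (hx : x ≠ 0) : Pigeo' (ivec x) = |(x 0 : ℝ)| := by
  have h1 : (1 : ℝ) ≤ |(x 0 : ℝ)| := by
    exact_mod_cast Int.one_le_abs (apply_zero_ne_zero_of_ne_zero hx)
  simp [Pigeo', ivec, max_eq_right h1]

lemma pigeo_fin_one (z : Fin 1 → ℝ) : Pigeo z = |z 0| := by
  simp [Pigeo]

end ColumnVectors

section Exponents

variable {n m : ℕ} {Θ : Matrix (Fin n) (Fin m) ℝ} {γ : ℝ}

lemma le_obeta (h : OrdApprox n m Θ γ) : (γ : EReal) ≤ obeta n m Θ :=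
  le_sSup ⟨γ, rfl, h⟩

lemma le_mbeta (h : MultApprox n m Θ γ) : (γ : EReal) ≤ mbeta n m Θ :=
  le_sSup ⟨γ, rfl, h⟩

lemma MultApprox.mono {γ' : ℝ} (h : γ ≤ γ') (H : MultApprox n m Θ γ') : MultApprox n m Θ γ :=
  Set.Infinite.mono (fun _ hp =>
    ⟨hp.1, hp.2.trans (Real.rpow_le_rpow_of_exponent_le (one_le_pigeo' _) (neg_le_neg h))⟩) H

lemma multApprox_of_lt_mbeta (h : (γ : EReal) < mbeta n m Θ) : MultApprox n m Θ γ := by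
  obtain ⟨_, ⟨γ', rfl, H⟩, hlt⟩ := lt_sSup_iff.1 h
  exact H.mono (EReal.coe_lt_coe_iff.1 hlt).le

lemma obeta_eq_top (h : ∀ γ, OrdApprox n m Θ γ) : obeta n m Θ = ⊤ :=
  top_le_iff.1 (EReal.ge_of_forall_gt_iff_ge.1 fun γ _ => le_obeta (h γ))

lemma mbeta_eq_top (h : ∀ γ, MultApprox n m Θ γ) : mbeta n m Θ = ⊤ :=
  top_le_iff.1 (EReal.ge_of_forall_gt_iff_ge.1 fun γ _ => le_mbeta (h γ))

end Exponents

section Multiples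

variable {n m : ℕ} (Θ : Matrix (Fin n) (Fin m) ℝ)

lemma mulVec_ivec_sub_smul (c : ℤ) (x : Fin m → ℤ) (y : Fin n → ℤ) :
    Θ.mulVec (ivec (c • x)) - ivec (c • y) = (c : ℝ) • (Θ.mulVec (ivec x) - ivec y) := by
  have hv : ∀ {k} (v : Fin k → ℤ), ivec (c • v) = (c : ℝ) • ivec v := fun v => by
    ext i; simp [ivec]
  rw [hv, hv, Matrix.mulVec_smul, smul_sub]

lemma infinite_of_smul_mem {S : Set ((Fin m → ℤ) × (Fin n → ℤ))} {x : Fin m → ℤ}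
    (hx : x ≠ 0) (y : Fin n → ℤ) (h : ∀ k : ℕ, (((k : ℤ) + 1) • x, ((k : ℤ) + 1) • y) ∈ S) :
    S.Infinite := by
  refine Set.infinite_of_injective_forall_mem (fun a b hab => ?_) h
  have := smul_left_injective ℤ hx (congrArg Prod.fst hab)
  simpa using this

lemma ordApprox_of_mulVec_eq {x : Fin m → ℤ} (hx : x ≠ 0) {y : Fin n → ℤ}
    (h : Θ.mulVec (ivec x) = ivec y) (γ : ℝ) : OrdApprox n m Θ γ :=
  infinite_of_smul_mem hx y fun k => by
    change ‖_‖ ≤ _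
    rw [mulVec_ivec_sub_smul, h, sub_self, smul_zero, norm_zero]
    exact Real.rpow_nonneg (norm_nonneg _) _

lemma mbeta_eq_top_of_mulVec_apply_eq {x : Fin m → ℤ} (hx : x ≠ 0) {y : Fin n → ℤ} (i : Fin n)
    (h : Θ.mulVec (ivec x) i = y i) : mbeta n m Θ = ⊤ :=
  mbeta_eq_top fun _ => infinite_of_smul_mem hx y fun k => by
    refine ⟨smul_ne_zero (by omega) hx, ?_⟩
    rw [pigeo_eq_zero_of_apply_eq_zero i (by
      rw [mulVec_ivec_sub_smul, Pi.smul_apply, Pi.sub_apply, h, ivec, sub_self, smul_zero])]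
    exact Real.rpow_nonneg (le_trans zero_le_one (one_le_pigeo' _)) _

end Multiples

/-- Pigeonhole the fractional parts of `t • α`, `t = 0, …, Q ^ card ι`, into `Q ^ card ι` boxes
of side `1 / Q`. -/
theorem exists_nat_forall_abs_mul_sub_int_le {ι : Type*} [Fintype ι] (α : ι → ℝ) {Q : ℕ}
    (hQ : 0 < Q) :
    ∃ k : ℕ, 0 < k ∧ k ≤ Q ^ Fintype.card ι ∧ ∀ j, ∃ z : ℤ, |k * α j - z| ≤ 1 / Q := by
  classical
  have hQ' : (0 : ℝ) < Q := by exact_mod_cast hQ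
  let box : ℕ → ι → ℤ := fun t j => ⌊Int.fract (t * α j) * Q⌋
  have hmaps : ∀ t ∈ Finset.range (Q ^ Fintype.card ι + 1),
      box t ∈ Fintype.piFinset fun _ => Finset.Ico 0 (Q : ℤ) := fun t _ =>
    Fintype.mem_piFinset.2 fun j => Finset.mem_Ico.2
      ⟨Int.floor_nonneg.2 (mul_nonneg (Int.fract_nonneg _) hQ'.le),
        Int.floor_lt.2 (by exact_mod_cast mul_lt_of_lt_one_left hQ' (Int.fract_lt_one _))⟩
  have hcard : (Fintype.piFinset fun _ : ι => Finset.Ico 0 (Q : ℤ)).card <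
      (Finset.range (Q ^ Fintype.card ι + 1)).card := by
    simp
  obtain ⟨a, ha, b, hb, hab, heq⟩ := Finset.exists_ne_map_eq_of_card_lt_of_maps_to hcard hmaps
  wlog hlt : a < b generalizing a b
  · exact this b hb a ha hab.symm heq.symm (lt_of_le_of_ne (not_lt.1 hlt) hab.symm)
  refine ⟨b - a, by omega, by rw [Finset.mem_range] at hb; omega,
    fun j => ⟨⌊b * α j⌋ - ⌊a * α j⌋, ?_⟩⟩
  have hcell : |Int.fract (b * α j) * Q - Int.fract (a * α j) * Q| < 1 :=
    Int.abs_sub_lt_one_of_floor_eq_floor (congrFun heq j).symm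
  rw [← sub_mul, abs_mul, abs_of_pos hQ', ← lt_div_iff₀ hQ'] at hcell
  calc |((b - a : ℕ) : ℝ) * α j - ((⌊b * α j⌋ - ⌊a * α j⌋ : ℤ) : ℝ)|
      = |Int.fract (b * α j) - Int.fract (a * α j)| := by
        rw [Nat.cast_sub hlt.le, Int.fract, Int.fract]; push_cast; ring_nf
    _ ≤ 1 / Q := hcell.le

section Dirichlet

variable {n : ℕ} (Θ : Matrix (Fin n) (Fin 1) ℝ)

lemma exists_norm_mulVec_ivec_sub_le {Q : ℕ} (hQ : 0 < Q) :
    ∃ k : ℕ, 0 < k ∧ k ≤ Q ^ n ∧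
      ∃ y : Fin n → ℤ, ‖Θ.mulVec (ivec fun _ => (k : ℤ)) - ivec y‖ ≤ 1 / Q := by
  obtain ⟨k, hk, hkQ, hz⟩ := exists_nat_forall_abs_mul_sub_int_le (fun i => Θ i 0) hQ
  choose y hy using hz
  rw [Fintype.card_fin] at hkQ
  refine ⟨k, hk, hkQ, y, (pi_norm_le_iff_of_nonneg (by positivity)).2 fun i => ?_⟩
  rw [Pi.sub_apply, mulVec_ivec_apply, Real.norm_eq_abs, mul_comm]
  exact_mod_cast hy i

/-- Exact solutions are handled by their multiples; otherwise the approximation errors are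
nonzero, so the errors `≤ 1 / Q` produced by the box principle yield infinitely many pairs. -/
lemma ordApprox_one_div (hn : 0 < n) : OrdApprox n 1 Θ (1 / n) := by
  by_cases hexact : ∃ x : Fin 1 → ℤ, x ≠ 0 ∧ ∃ y, Θ.mulVec (ivec x) = ivec y
  · obtain ⟨x, hx, y, h⟩ := hexact
    exact ordApprox_of_mulVec_eq Θ hx h _
  push Not at hexact
  let err : (Fin 1 → ℤ) × (Fin n → ℤ) → ℝ := fun p => ‖Θ.mulVec (ivec p.1) - ivec p.2‖
  refine Set.Infinite.of_image (fun p => (err p)⁻¹) (Set.infinite_of_forall_exists_gt fun B => ?_)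
  obtain ⟨Q, hBQ⟩ := exists_nat_gt (max B 0)
  have hQ : (0 : ℝ) < Q := (le_max_right B 0).trans_lt hBQ
  obtain ⟨k, hk, hkQ, y, hy⟩ := exists_norm_mulVec_ivec_sub_le Θ (Nat.cast_pos.1 hQ)
  have hk0 : (fun _ => (k : ℤ)) ≠ (0 : Fin 1 → ℤ) := fun h => by
    have := congrFun h 0; simp at this; omega
  have herr : 0 < ‖Θ.mulVec (ivec fun _ => (k : ℤ)) - ivec y‖ :=
    norm_pos_iff.2 (sub_ne_zero.2 (hexact _ hk0 y))
  refine ⟨_, ⟨(fun _ => (k : ℤ), y), ?_, rfl⟩, ?_⟩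
  · change ‖_‖ ≤ _
    have hkn : (k : ℝ) ^ ((1 : ℝ) / n) ≤ Q := by
      calc (k : ℝ) ^ ((1 : ℝ) / n) ≤ ((Q : ℝ) ^ n) ^ ((1 : ℝ) / n) :=
            Real.rpow_le_rpow (Nat.cast_nonneg _) (by exact_mod_cast hkQ) (by positivity)
        _ = Q := by rw [one_div, Real.pow_rpow_inv_natCast hQ.le hn.ne']
    rw [norm_ivec_fin_one, Int.cast_natCast, Nat.abs_cast, Real.rpow_neg (Nat.cast_nonneg _),
      ← one_div]
    exact hy.trans (one_div_le_one_div_of_le (by positivity) hkn)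
  · rw [one_div] at hy
    exact ((le_max_left B 0).trans_lt hBQ).trans_le ((le_inv_comm₀ herr hQ).1 hy)

lemma exists_nat_forall_abs_mul_sub_int_le_of_abs_sub_le (v : Fin n → ℝ) {i₀ : Fin n} {y₀ : ℤ}
    {Q : ℕ} {δ : ℝ} (hQ : 0 < Q) (hδ : 1 / Q ≤ Q ^ (n - 1) * δ) (hv : |v i₀ - y₀| ≤ δ) :
    ∃ k : ℕ, 0 < k ∧ k ≤ Q ^ (n - 1) ∧
      ∃ w : Fin n → ℤ, ∀ j, |k * v j - w j| ≤ Q ^ (n - 1) * δ := by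
  classical
  obtain ⟨k, hk, hkQ, hz⟩ :=
    exists_nat_forall_abs_mul_sub_int_le (fun j : {j // j ≠ i₀} => v j) hQ
  choose z hz using hz
  rw [Fintype.card_subtype_compl, Fintype.card_fin, Fintype.card_unique] at hkQ
  refine ⟨k, hk, hkQ, fun j => if h : j = i₀ then k * y₀ else z ⟨j, h⟩, fun j => ?_⟩
  by_cases h : j = i₀
  · subst h
    dsimp only
    rw [dif_pos rfl, Int.cast_mul, Int.cast_natCast, ← mul_sub, abs_mul, Nat.abs_cast]
    exact mul_le_mul (by exact_mod_cast hkQ) hv (abs_nonneg _) (by positivity)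
  · dsimp only
    rw [dif_neg h]
    exact (hz ⟨j, h⟩).trans hδ

end Dirichlet

lemma exists_nat_forall_abs_mul_sub_int_le_at_scale {n : ℕ} (v : Fin n → ℝ) (i₀ : Fin n)
    (y₀ : ℤ) {T γ : ℝ} (hT : 1 ≤ T) (hγ : 0 ≤ γ) (hv : |v i₀ - y₀| ≤ T ^ (-γ)) :
    ∃ E : ℝ, 0 < E ∧ E ≤ 2 ^ (n - 1) * T ^ (γ / n * (n - 1 : ℕ)) ∧
      ∃ k : ℕ, 0 < k ∧ (k : ℝ) ≤ E ∧
        ∃ w : Fin n → ℤ, ∀ j, |k * v j - w j| ≤ E * T ^ (-γ) := by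
  have hn : 0 < n := i₀.pos
  have hT0 : 0 < T := zero_lt_one.trans_le hT
  have hs : 1 ≤ T ^ (γ / n) := Real.one_le_rpow hT (by positivity)
  set Q := ⌈T ^ (γ / n)⌉₊
  have hQ : 0 < Q := Nat.ceil_pos.2 (zero_lt_one.trans_le hs)
  have hsQ : T ^ (γ / n) ≤ Q := Nat.le_ceil _
  have hQs : (Q : ℝ) ≤ 2 * T ^ (γ / n) := by
    linarith [Nat.ceil_lt_add_one (zero_le_one.trans hs)]
  have hδ : 1 / Q ≤ Q ^ (n - 1) * T ^ (-γ) := by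
    rw [div_le_iff₀ (by positivity)]
    calc (1 : ℝ) = (T ^ (γ / n)) ^ n * T ^ (-γ) := by
          rw [← Real.rpow_mul_natCast hT0.le, div_mul_cancel₀ _ (by positivity),
            ← Real.rpow_add hT0, add_neg_cancel, Real.rpow_zero]
      _ ≤ (Q : ℝ) ^ n * T ^ (-γ) := by gcongr
      _ = Q ^ (n - 1) * T ^ (-γ) * Q := by
          rw [← Nat.sub_add_cancel hn, pow_succ, Nat.add_sub_cancel]; ring
  obtain ⟨k, hk, hkQ, w, hw⟩ := exists_nat_forall_abs_mul_sub_int_le_of_abs_sub_le v hQ hδ hv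
  refine ⟨Q ^ (n - 1), by positivity, ?_, k, hk, by exact_mod_cast hkQ, w, hw⟩
  calc (Q : ℝ) ^ (n - 1) ≤ (2 * T ^ (γ / n)) ^ (n - 1) := by gcongr
    _ = 2 ^ (n - 1) * T ^ (γ / n * (n - 1 : ℕ)) := by
        rw [mul_pow, Real.rpow_mul_natCast hT0.le]

lemma eventually_mul_rpow_neg_le_rpow_neg {C a γ r : ℝ} (hC : 0 < C) (hr : 0 ≤ r)
    (h : a * (1 + r) + r < γ) :
    ∀ᶠ T in atTop, ∀ E, 0 < E → E ≤ C * T ^ a → E * T ^ (-γ) ≤ (E * T) ^ (-r) := by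
  filter_upwards [(tendsto_rpow_atTop (sub_pos.2 h)).eventually_ge_atTop (C ^ (1 + r)),
    eventually_gt_atTop 0] with T hT hT0 E hE hEC
  have hE' : E ^ (1 + r) ≤ T ^ (γ - r) :=
    calc E ^ (1 + r) ≤ (C * T ^ a) ^ (1 + r) := by gcongr
      _ = C ^ (1 + r) * T ^ (a * (1 + r)) := by
          rw [Real.mul_rpow hC.le (by positivity), ← Real.rpow_mul hT0.le]
      _ ≤ T ^ (γ - (a * (1 + r) + r)) * T ^ (a * (1 + r)) := by gcongr
      _ = T ^ (γ - r) := by rw [← Real.rpow_add hT0]; ring_nf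
  calc E * T ^ (-γ) = E ^ (1 + r) * E ^ (-r) * T ^ (-γ) := by
        rw [← Real.rpow_add hE, add_neg_cancel_right, Real.rpow_one]
    _ ≤ T ^ (γ - r) * E ^ (-r) * T ^ (-γ) := by gcongr
    _ = (E * T) ^ (-r) := by
        rw [Real.mul_rpow hE.le hT0.le, mul_comm (T ^ (γ - r)), mul_assoc, ← Real.rpow_add hT0]
        ring_nf

lemma Set.Infinite.exists_lt_abs_fst {β : Type*} {S : Set ((Fin 1 → ℤ) × β)} (hS : S.Infinite)
    (hfib : ∀ x, {y | (x, y) ∈ S}.Finite) (X : ℝ) : ∃ p ∈ S, X < |(p.1 0 : ℝ)| := by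
  by_contra! h
  have hK : {x : Fin 1 → ℤ | |(x 0 : ℝ)| ≤ X}.Finite :=
    (Set.Finite.pi fun _ => Int.finite_setOf_abs_sub_le 0 X).subset fun x hx i _ => by
      rw [Subsingleton.elim i 0]
      simpa using hx
  refine hS ((hK.biUnion fun x _ => (Set.finite_singleton x).prod (hfib x)).subset ?_)
  rintro ⟨x, y⟩ hp
  exact Set.mem_biUnion (h _ hp) ⟨rfl, hp⟩

section Transfer

variable {n : ℕ} {Θ : Matrix (Fin n) (Fin 1) ℝ}

lemma finite_setOf_pigeo_mulVec_ivec_sub_le (hn : 0 < n)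
    (hint : ∀ t : ℤ, t ≠ 0 → ∀ i (z : ℤ), Θ i 0 * t ≠ z) {x : Fin 1 → ℤ} (hx : x ≠ 0) (B : ℝ) :
    {y : Fin n → ℤ | Pigeo (Θ.mulVec (ivec x) - ivec y) ≤ B}.Finite :=
  (finite_setOf_prod_abs_sub_le (hint _ (apply_zero_ne_zero_of_ne_zero hx)) (B ^ n)).subset
    fun y hy => by simpa [mulVec_ivec_apply, ivec] using prod_abs_le_pow_of_pigeo_le hn hy

/-- A multiplicative solution `(x, y)` with `|x| = T` has a coordinate `i₀` with
`|x Θᵢ₀ - yᵢ₀| ≤ T ^ (-γ)`; Dirichlet's principle at scale `T ^ (γ / n)` for the other coordinates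
of `x Θ` then gives a multiple `k x` with `|k x Θ - w|_∞ ≤ |k x| ^ (-r)` once `T` is large. -/
theorem ordApprox_of_multApprox (hn : 0 < n)
    (hint : ∀ t : ℤ, t ≠ 0 → ∀ i (z : ℤ), Θ i 0 * t ≠ z) {γ r : ℝ} (hγ : 0 < γ) (hr : 0 ≤ r)
    (hrγ : r * ((n - 1) * γ + n) < γ) (H : MultApprox n 1 Θ γ) : OrdApprox n 1 Θ r := by
  have hexp : γ / n * (n - 1 : ℕ) * (1 + r) + r < γ := by
    have hn' : (0 : ℝ) < n := by positivity
    rw [Nat.cast_pred hn, div_mul_eq_mul_div, div_mul_eq_mul_div, div_add' _ _ _ hn'.ne',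
      div_lt_iff₀ hn']
    linarith
  obtain ⟨T₀, hT₀⟩ := eventually_atTop.1
    (eventually_mul_rpow_neg_le_rpow_neg (by positivity : (0 : ℝ) < 2 ^ (n - 1)) hr hexp)
  have hfib (x : Fin 1 → ℤ) : {y | (x, y) ∈ {p : (Fin 1 → ℤ) × (Fin n → ℤ) | p.1 ≠ 0 ∧
      Pigeo (Θ.mulVec (ivec p.1) - ivec p.2) ≤ Pigeo' (ivec p.1) ^ (-γ)}}.Finite := by
    by_cases hx : x = 0
    · exact Set.finite_empty.subset fun y hy => hy.1 hx
    · exact (finite_setOf_pigeo_mulVec_ivec_sub_le hn hint hx (Pigeo' (ivec x) ^ (-γ))).subset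
        fun y hy => hy.2
  refine Set.Infinite.of_image (fun p => |(p.1 0 : ℝ)|)
    (Set.infinite_of_forall_exists_gt fun X => ?_)
  obtain ⟨⟨x, y⟩, ⟨hx, hxy⟩, hT⟩ := H.exists_lt_abs_fst hfib (max (max T₀ X) 1)
  set T := |(x 0 : ℝ)|
  simp only [max_lt_iff] at hT
  rw [pigeo'_ivec_fin_one hx] at hxy
  obtain ⟨i₀, hi₀⟩ := exists_abs_le_pigeo hn (Θ.mulVec (ivec x) - ivec y)
  obtain ⟨E, hE, hEC, k, hk, hkE, w, hw⟩ :=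
    exists_nat_forall_abs_mul_sub_int_le_at_scale (fun i => Θ i 0 * x 0) i₀ (y i₀) hT.2.le hγ.le
      (by simpa [mulVec_ivec_apply, ivec] using hi₀.trans hxy)
  have hkx : |(((k : ℤ) • x) 0 : ℝ)| = k * T := by simp [abs_mul, T]
  refine ⟨_, ⟨((k : ℤ) • x, w), ?_, rfl⟩, ?_⟩
  · change ‖_‖ ≤ _
    rw [norm_ivec_fin_one, hkx]
    calc ‖Θ.mulVec (ivec ((k : ℤ) • x)) - ivec w‖ ≤ E * T ^ (-γ) :=
          (pi_norm_le_iff_of_nonneg (by positivity)).2 fun j => by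
            simpa [mulVec_ivec_apply, ivec, mul_left_comm] using hw j
      _ ≤ (E * T) ^ (-r) := hT₀ T (by linarith) E hE hEC
      _ ≤ (k * T) ^ (-r) :=
          Real.rpow_le_rpow_of_nonpos (mul_pos (Nat.cast_pos.2 hk) (by linarith))
            (mul_le_mul_of_nonneg_right hkE (by positivity)) (neg_nonpos.2 hr)
  · change X < |(((k : ℤ) • x) 0 : ℝ)|
    rw [hkx]
    nlinarith [(Nat.one_le_cast (α := ℝ)).2 hk]

end Transfer

section Comparison

variable {n : ℕ} {Θ : Matrix (Fin n) (Fin 1) ℝ} {γ : ℝ}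

lemma ordApprox_of_multApprox_fin_one {Θ : Matrix (Fin 1) (Fin 1) ℝ}
    (H : MultApprox 1 1 Θ γ) : OrdApprox 1 1 Θ γ :=
  Set.Infinite.mono (fun p hp => by
    change ‖_‖ ≤ _
    rw [norm_fin_one, ← pigeo_fin_one, norm_ivec_fin_one, ← pigeo'_ivec_fin_one hp.1]
    exact hp.2) H

lemma multApprox_of_ordApprox (hn : 0 < n) (hγ : 0 < γ) (H : OrdApprox n 1 Θ γ) :
    MultApprox n 1 Θ γ := by
  refine Set.Infinite.mono ?_ (H.sdiff (Set.finite_singleton (0, 0)))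
  rintro ⟨x, y⟩ ⟨hp, hne⟩
  change ‖Θ.mulVec (ivec x) - ivec y‖ ≤ ‖ivec x‖ ^ (-γ) at hp
  have hx : x ≠ 0 := by
    rintro rfl
    rw [norm_ivec_fin_one, Pi.zero_apply, Int.cast_zero, abs_zero,
      Real.zero_rpow (neg_ne_zero.2 hγ.ne'), norm_le_zero_iff, sub_eq_zero] at hp
    refine hne (Prod.ext rfl (funext fun i => ?_))
    have := congrFun hp i
    rw [mulVec_ivec_apply] at this
    exact_mod_cast (by simpa [ivec] using this.symm : (y i : ℝ) = 0)
  refine ⟨hx, ?_⟩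
  calc Pigeo (Θ.mulVec (ivec x) - ivec y) ≤ ‖Θ.mulVec (ivec x) - ivec y‖ := pigeo_le_norm hn _
    _ ≤ ‖ivec x‖ ^ (-γ) := hp
    _ = Pigeo' (ivec x) ^ (-γ) := by rw [norm_ivec_fin_one, pigeo'_ivec_fin_one hx]

lemma one_div_le_mbeta (hn : 0 < n) : ((1 / n : ℝ) : EReal) ≤ mbeta n 1 Θ :=
  le_mbeta (multApprox_of_ordApprox hn (by positivity) (ordApprox_one_div Θ hn))

lemma obeta_le_mbeta (hn : 0 < n) : obeta n 1 Θ ≤ mbeta n 1 Θ := by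
  refine sSup_le ?_
  rintro _ ⟨γ, rfl, H⟩
  rcases le_or_gt γ 0 with hγ | hγ
  · exact (EReal.coe_le_coe_iff.2 (hγ.trans (by positivity))).trans (one_div_le_mbeta hn)
  · exact le_mbeta (multApprox_of_ordApprox hn hγ H)

lemma mul_ne_int_of_mbeta_ne_top (h : mbeta n 1 Θ ≠ ⊤) :
    ∀ t : ℤ, t ≠ 0 → ∀ i (z : ℤ), Θ i 0 * t ≠ z := fun t ht i z hz =>
  h <| mbeta_eq_top_of_mulVec_apply_eq Θ (x := fun _ => t) (fun h0 => ht (congrFun h0 0))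
    (y := fun _ => z) i (by rw [mulVec_ivec_apply]; exact hz)

lemma div_le_obeta (hn : 0 < n) {b : ℝ} (hb : mbeta n 1 Θ = b) :
    ((b / ((n - 1) * b + n) : ℝ) : EReal) ≤ obeta n 1 Θ := by
  have hb0 : 0 < b := (by positivity : (0 : ℝ) < 1 / n).trans_le
    (EReal.coe_le_coe_iff.1 (hb ▸ one_div_le_mbeta hn))
  have hden (γ : ℝ) (hγ : 0 ≤ γ) : 0 < (n - 1) * γ + n := by
    have : (1 : ℝ) ≤ n := by exact_mod_cast hn
    nlinarith
  refine EReal.ge_of_forall_gt_iff_ge.1 fun r hr => ?_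
  rw [EReal.coe_lt_coe_iff] at hr
  rcases le_or_gt r 0 with hr0 | hr0
  · exact (EReal.coe_le_coe_iff.2 (hr0.trans (by positivity))).trans
      (le_obeta (ordApprox_one_div Θ hn))
  have hcont : ContinuousAt (fun γ : ℝ => γ / ((n - 1) * γ + n)) b :=
    continuousAt_id.div (by fun_prop) (hden b hb0.le).ne'
  obtain ⟨γ, hrγ, hγ0, hγb⟩ := (((hcont.eventually_const_lt hr).filter_mono
    nhdsWithin_le_nhds).and (Ioo_mem_nhdsLT hb0)).exists
  refine le_obeta (ordApprox_of_multApprox hn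
    (mul_ne_int_of_mbeta_ne_top (hb ▸ EReal.coe_ne_top b)) hγ0 hr0.le ?_
    (multApprox_of_lt_mbeta (hb ▸ EReal.coe_lt_coe_iff.2 hγb)))
  rwa [lt_div_iff₀ (hden γ hγ0.le)] at hrγ

end Comparison

lemma mul_sub_one_div_le_div {N b : ℝ} (hN : 1 ≤ N) (hb : 0 ≤ b) :
    (N * b - 1) / (N * (N - 1) * b + N ^ 2 - N + 1) ≤ b / ((N - 1) * b + N) := by
  have h : 0 ≤ N * (N - 1) * b := by
    have : 0 ≤ N - 1 := by linarith
    positivity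
  rw [div_le_div_iff₀ (by nlinarith) (by nlinarith)]
  nlinarith

/-- Corollary 4: for m = 1, β_×(Θ) ≥ β(Θ) ≥ (n β_×(Θ) − 1)/(n(n−1) β_×(Θ) + n² − n + 1),
where for β_×(Θ) = +∞ the lower bound is read as 1/(n(n−1)) if n ≥ 2, and as +∞ if n = 1. -/
theorem obeta_between_mbeta (n : ℕ) (hn : 0 < n)
    (Θ : Matrix (Fin n) (Fin 1) ℝ) :
    mbeta n 1 Θ ≥ obeta n 1 Θ ∧
    (mbeta n 1 Θ ≠ ⊤ →
      obeta n 1 Θ ≥ ((((n : ℝ) * (mbeta n 1 Θ).toReal - 1) /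
        ((n : ℝ) * ((n : ℝ) - 1) * (mbeta n 1 Θ).toReal + (n : ℝ)^2 - n + 1) : ℝ) : EReal)) ∧
    (mbeta n 1 Θ = ⊤ → n = 1 → obeta n 1 Θ = ⊤) ∧
    (mbeta n 1 Θ = ⊤ → 2 ≤ n →
      obeta n 1 Θ ≥ (((1 : ℝ) / ((n : ℝ) * ((n : ℝ) - 1)) : ℝ) : EReal)) := by
  have hmbeta : ((1 / n : ℝ) : EReal) ≤ mbeta n 1 Θ := one_div_le_mbeta hn
  refine ⟨obeta_le_mbeta hn, fun htop => ?_, fun htop hn1 => ?_, fun _ hn2 => ?_⟩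
  · have hb := EReal.coe_toReal htop (ne_bot_of_le_ne_bot (EReal.coe_ne_bot _) hmbeta)
    refine le_trans (EReal.coe_le_coe_iff.2 ?_) (div_le_obeta hn hb.symm)
    exact mul_sub_one_div_le_div (by exact_mod_cast hn)
      (EReal.toReal_nonneg ((EReal.coe_nonneg.2 (by positivity)).trans hmbeta))
  · subst hn1
    exact obeta_eq_top fun γ =>
      ordApprox_of_multApprox_fin_one (multApprox_of_lt_mbeta (htop ▸ EReal.coe_lt_top γ))
  · have h2 : (2 : ℝ) ≤ n := by exact_mod_cast hn2
    refine le_trans (EReal.coe_le_coe_iff.2 ?_) (le_obeta (ordApprox_one_div Θ hn))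
    exact one_div_le_one_div_of_le (by positivity) (by nlinarith)
end
end

section
/- Let α, β be real numbers and μ > 0. If there are infinitely many positive integers q such that q·‖qα‖·‖qβ‖ ≤ μ, then there are infinitely many positive integers q such that q·‖qα‖·‖qβ‖ ≤ (4/3)^{9/4}·μ^{1/4} and max(‖qα‖, ‖qβ‖) ≤ (4/3)^{5/4}·μ^{1/4}. -/
noncomputable section

/-- Distance from a real number to the nearest integer. -/
def nint (x : ℝ) : ℝ := |x - (round x : ℤ)|

/-!
Write `δ = (4/3)^{5/4} μ^{1/4}`, so that `μ = (3/4)^5 δ^4` and the two bounds read `4δ/3` and `δ`.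

If `δ ≥ 1/2` the bound on the maximum is automatic, and Dirichlet's theorem gives infinitely many
`q` with `q‖qα‖ ≤ 1`, hence `q‖qα‖‖qβ‖ ≤ 1/2 ≤ 4δ/3`.

Otherwise take `q` with `q‖qα‖‖qβ‖ ≤ μ` and, say, `‖qβ‖ ≤ ‖qα‖`. If `‖qα‖ ≤ δ`, then `q` itself
works. If not, `q‖qβ‖ ≤ (3/4)^5 δ^3`; Dirichlet's theorem applied to `qα` gives `m ≤ δ⁻¹` with
`‖mqα‖ ≤ δ`, while `‖mqβ‖ ≤ m‖qβ‖` stays below `(3/4)^5 δ^2`, so `mq` works.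
-/

open Filter Topology

lemma nint_nonneg (x : ℝ) : 0 ≤ nint x := abs_nonneg _

lemma nint_le_half (x : ℝ) : nint x ≤ 1 / 2 := abs_sub_round x

lemma nint_natCast_mul_le (k : ℕ) (x : ℝ) : nint (k * x) ≤ k * nint x :=
  calc nint (k * x) ≤ |k * x - ((k * round x : ℤ) : ℝ)| := round_le _ _
    _ = |(k : ℝ) * (x - round x)| := by push_cast; ring_nf
    _ = k * nint x := by rw [abs_mul, Nat.abs_cast, nint]

lemma exists_nat_le_inv_nint_mul_le (x : ℝ) {δ : ℝ} (hδ0 : 0 < δ) (hδ1 : δ ≤ 1) :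
    ∃ m : ℕ, 0 < m ∧ (m : ℝ) ≤ δ⁻¹ ∧ nint (m * x) ≤ δ := by
  have hn : 0 < ⌊δ⁻¹⌋₊ := Nat.floor_pos.2 (one_le_inv_iff₀.2 ⟨hδ0, hδ1⟩)
  obtain ⟨m, hm0, hmn, hm⟩ := Real.exists_nat_abs_mul_sub_round_le x hn
  refine ⟨m, hm0, (Nat.cast_le.2 hmn).trans (Nat.floor_le (inv_nonneg.2 hδ0.le)), hm.trans ?_⟩
  rw [one_div_le (by positivity) hδ0, one_div]
  exact (Nat.lt_floor_add_one δ⁻¹).le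

lemma natCast_mul_nint_le_one_infinite (α : ℝ) :
    {q : ℕ | 0 < q ∧ q * nint (q * α) ≤ 1}.Infinite := by
  refine Set.infinite_of_forall_exists_gt fun N => ?_
  by_cases hrat : ∃ k : ℕ, 0 < k ∧ nint (k * α) = 0
  · obtain ⟨k, hk0, hk⟩ := hrat
    have hzero : nint ((k * (N + 1) : ℕ) * α) = 0 := by
      refine le_antisymm ?_ (nint_nonneg _)
      calc nint ((k * (N + 1) : ℕ) * α) = nint ((N + 1 : ℕ) * (k * α)) := by push_cast; ring_nf
        _ ≤ (N + 1 : ℕ) * nint (k * α) := nint_natCast_mul_le _ _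
        _ = 0 := by rw [hk, mul_zero]
    refine ⟨k * (N + 1), ⟨by positivity, by rw [hzero, mul_zero]; exact zero_le_one⟩, ?_⟩
    nlinarith
  · push Not at hrat
    have hpos : ∀ k ∈ Finset.Icc 1 N, 0 < nint (k * α) := fun k hk =>
      (nint_nonneg _).lt_of_ne' (hrat k (Finset.mem_Icc.1 hk).1)
    -- any `q > 0` with `‖qα‖ ≤ ε` then exceeds `N`
    have hsmall : ∀ᶠ ε in 𝓝 (0 : ℝ), ε ≤ 1 ∧ ∀ k ∈ Finset.Icc 1 N, ε < nint (k * α) :=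
      (eventually_le_nhds one_pos).and
        ((Filter.eventually_all_finset _).2 fun k hk => eventually_lt_nhds (hpos k hk))
    obtain ⟨ε, ⟨hε1, hεN⟩, hε0⟩ := ((eventually_nhdsWithin_of_eventually_nhds hsmall).and
      (self_mem_nhdsWithin : ∀ᶠ ε in 𝓝[>] (0 : ℝ), 0 < ε)).exists
    obtain ⟨q, hq0, hqε, hq⟩ := exists_nat_le_inv_nint_mul_le α hε0 hε1
    refine ⟨q, ⟨hq0, ?_⟩, ?_⟩
    · calc (q : ℝ) * nint (q * α) ≤ ε⁻¹ * ε := by gcongr; exact nint_nonneg _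
        _ = 1 := inv_mul_cancel₀ hε0.ne'
    · by_contra! hqN
      exact (hεN q (Finset.mem_Icc.2 ⟨hq0, hqN⟩)).not_ge hq

lemma exists_ge_of_nint_le_nint (α β : ℝ) {δ : ℝ} (hδ0 : 0 < δ) (hδ1 : δ ≤ 1) {q : ℕ} (hq : 0 < q)
    (hprod : q * nint (q * α) * nint (q * β) ≤ (3 / 4) ^ 5 * δ ^ 4)
    (hba : nint (q * β) ≤ nint (q * α)) :
    ∃ p : ℕ, q ≤ p ∧ 0 < p ∧ p * nint (p * α) * nint (p * β) ≤ 4 / 3 * δ ∧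
      nint (p * α) ≤ δ ∧ nint (p * β) ≤ δ := by
  set a := nint (q * α)
  set b := nint (q * β)
  have ha0 : 0 ≤ a := nint_nonneg _
  have hb0 : 0 ≤ b := nint_nonneg _
  rcases le_or_gt a δ with hqa | hqa
  · refine ⟨q, le_rfl, hq, hprod.trans ?_, hqa, hba.trans hqa⟩
    have : δ ^ 3 ≤ 1 := pow_le_one₀ hδ0.le hδ1
    nlinarith
  have hqb : q * b ≤ (3 / 4) ^ 5 * δ ^ 3 := by
    refine le_of_mul_le_mul_right ?_ hδ0
    calc q * b * δ ≤ q * a * b := by nlinarith [mul_nonneg (Nat.cast_nonneg q) hb0]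
      _ ≤ (3 / 4) ^ 5 * δ ^ 3 * δ := by linarith [hprod]
  obtain ⟨m, hm0, hmδ, hma⟩ := exists_nat_le_inv_nint_mul_le (q * α) hδ0 hδ1
  have hcast : ∀ x : ℝ, ((m * q : ℕ) : ℝ) * x = m * (q * x) := fun x => by push_cast; ring
  have hpα : nint ((m * q : ℕ) * α) ≤ δ := by rwa [hcast]
  have hpβ : nint ((m * q : ℕ) * β) ≤ m * b := by rw [hcast]; exact nint_natCast_mul_le _ _
  have hmδ1 : m * δ ≤ 1 := by rwa [← le_div_iff₀ hδ0, one_div]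
  have hmqb : m * (q * b) ≤ (3 / 4) ^ 5 * δ ^ 2 :=
    calc m * (q * b) ≤ δ⁻¹ * ((3 / 4) ^ 5 * δ ^ 3) := by gcongr
      _ = (3 / 4) ^ 5 * δ ^ 2 := by field_simp
  refine ⟨m * q, Nat.le_mul_of_pos_left q hm0, Nat.mul_pos hm0 hq, ?_, hpα, ?_⟩
  · calc ((m * q : ℕ) : ℝ) * nint ((m * q : ℕ) * α) * nint ((m * q : ℕ) * β)
        ≤ ((m * q : ℕ) : ℝ) * δ * (m * b) := by gcongr; exacts [nint_nonneg _]
      _ = m * (q * b) * (m * δ) := by push_cast; ring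
      _ ≤ (3 / 4) ^ 5 * δ ^ 2 * 1 := by gcongr
      _ ≤ 4 / 3 * δ := by nlinarith
  · have hq1 : (1 : ℝ) ≤ q := Nat.one_le_cast.2 hq
    calc nint ((m * q : ℕ) * β) ≤ m * b := hpβ
      _ ≤ m * (q * b) := by nlinarith [mul_nonneg (Nat.cast_nonneg m) hb0]
      _ ≤ (3 / 4) ^ 5 * δ ^ 2 := hmqb
      _ ≤ δ := by nlinarith

lemma exists_ge_of_prod_le (α β : ℝ) {δ : ℝ} (hδ0 : 0 < δ) (hδ1 : δ ≤ 1) {q : ℕ} (hq : 0 < q)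
    (hprod : q * nint (q * α) * nint (q * β) ≤ (3 / 4) ^ 5 * δ ^ 4) :
    ∃ p : ℕ, q ≤ p ∧ 0 < p ∧ p * nint (p * α) * nint (p * β) ≤ 4 / 3 * δ ∧
      max (nint (p * α)) (nint (p * β)) ≤ δ := by
  rcases le_total (nint (q * β)) (nint (q * α)) with hba | hab
  · obtain ⟨p, hqp, hp, hprod', hpα, hpβ⟩ := exists_ge_of_nint_le_nint α β hδ0 hδ1 hq hprod hba
    exact ⟨p, hqp, hp, hprod', max_le hpα hpβ⟩
  · rw [mul_right_comm] at hprod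
    obtain ⟨p, hqp, hp, hprod', hpβ, hpα⟩ := exists_ge_of_nint_le_nint β α hδ0 hδ1 hq hprod hab
    exact ⟨p, hqp, hp, by rwa [mul_right_comm], max_le hpα hpβ⟩

lemma infinite_prod_le_max_le_of_infinite (α β : ℝ) {δ : ℝ} (hδ0 : 0 < δ) (hδ1 : δ ≤ 1)
    (h : {q : ℕ | 0 < q ∧ q * nint (q * α) * nint (q * β) ≤ (3 / 4) ^ 5 * δ ^ 4}.Infinite) :
    {q : ℕ | 0 < q ∧ q * nint (q * α) * nint (q * β) ≤ 4 / 3 * δ ∧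
      max (nint (q * α)) (nint (q * β)) ≤ δ}.Infinite := by
  refine Set.infinite_of_forall_exists_gt fun N => ?_
  obtain ⟨q, ⟨hq, hprod⟩, hNq⟩ := h.exists_gt N
  obtain ⟨p, hqp, hp, hprod', hmax⟩ := exists_ge_of_prod_le α β hδ0 hδ1 hq hprod
  exact ⟨p, ⟨hp, hprod', hmax⟩, hNq.trans_le hqp⟩

lemma infinite_prod_le_max_le_of_half_le (α β : ℝ) {δ : ℝ} (hδ : 1 / 2 ≤ δ) :
    {q : ℕ | 0 < q ∧ q * nint (q * α) * nint (q * β) ≤ 4 / 3 * δ ∧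
      max (nint (q * α)) (nint (q * β)) ≤ δ}.Infinite := by
  refine (natCast_mul_nint_le_one_infinite α).mono ?_
  rintro q ⟨hq, hqα⟩
  refine ⟨hq, ?_, ?_⟩
  · calc (q : ℝ) * nint (q * α) * nint (q * β) ≤ 1 * (1 / 2) := by
          gcongr
          exacts [nint_nonneg _, nint_le_half _]
      _ ≤ 4 / 3 * δ := by linarith
  · exact max_le ((nint_le_half _).trans hδ) ((nint_le_half _).trans hδ)

/-- Corollary 5: quantitative statement towards the Littlewood conjecture. -/
theorem littlewood_supnorm (α β μ : ℝ) (hμ : 0 < μ)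
    (h : {q : ℕ | 0 < q ∧ (q : ℝ) * nint (q * α) * nint (q * β) ≤ μ}.Infinite) :
    {q : ℕ | 0 < q ∧
      (q : ℝ) * nint (q * α) * nint (q * β) ≤ ((4:ℝ)/3) ^ ((9:ℝ)/4) * μ ^ ((1:ℝ)/4) ∧
      max (nint (q * α)) (nint (q * β)) ≤ ((4:ℝ)/3) ^ ((5:ℝ)/4) * μ ^ ((1:ℝ)/4)}.Infinite := by
  set δ := ((4:ℝ)/3) ^ ((5:ℝ)/4) * μ ^ ((1:ℝ)/4) with hδ
  have hδ0 : 0 < δ := by positivity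
  have hμδ : μ = (3 / 4) ^ 5 * δ ^ 4 := by
    rw [hδ, mul_pow, ← Real.rpow_mul_natCast (by norm_num), ← Real.rpow_mul_natCast hμ.le]
    norm_num
    ring
  have hcδ : ((4:ℝ)/3) ^ ((9:ℝ)/4) * μ ^ ((1:ℝ)/4) = 4 / 3 * δ := by
    rw [hδ, show (9:ℝ)/4 = 5/4 + 1 by norm_num, Real.rpow_add_one (by norm_num)]
    ring
  rw [hcδ]
  rcases le_or_gt (1 / 2) δ with hbig | hsmall
  · exact infinite_prod_le_max_le_of_half_le α β hbig
  · rw [hμδ] at h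
    exact infinite_prod_le_max_le_of_infinite α β hδ0 (by linarith) h
end
end

section
/- Let M ⊂ ℝ^k be a convex k-dimensional body symmetric about the origin, let e be a unit vector in ℝ^k, and let h = sup{ 2⟨e, x⟩ : x ∈ M } be the thickness of M with respect to e. Then vol_k(M) ≤ h · vol_{k−1}(M ∩ e^⊥), where e^⊥ = { x ∈ ℝ^k : ⟨e, x⟩ = 0 }. -/
/-!
Write `M_t` for the slice of `M` by the hyperplane `⟪e, x⟫ = t`. By Fubini, `vol M = ∫ vol M_t dt`,
and `M_t = ∅` unless `|t| ≤ h / 2`, so it suffices that the central slice is the largest. By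
convexity and symmetry `M_0 ⊇ (M_t - M_t) / 2`, and the Brunn–Minkowski inequality
`vol ((A - A) / 2) ≥ vol A` gives `vol M_t ≤ vol M_0`. Brunn–Minkowski is derived from the midpoint
Prékopa–Leindler inequality `∫ F · ∫ G ≤ (∫ H)²` (for `F x · G y ≤ H ((x + y) / 2)²`), proved by
induction on the dimension; in dimension one it follows from `vol A + vol B ≤ vol (A + B)` applied
to superlevel sets. Finally, in coordinates for an orthonormal basis starting with `e`, the central
slice is a 1-Lipschitz image of `M ∩ e^⊥`, which bounds its volume by the Hausdorff measure.
-/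

open MeasureTheory Set Pointwise
open scoped ENNReal NNReal

theorem ENNReal.mul_le_sq_of_add_le_two_mul {u v w : ℝ≥0∞} (h : u + v ≤ 2 * w) :
    u * v ≤ w ^ 2 := by
  rcases eq_or_ne w ∞ with rfl | hw
  · simp
  have huv : u + v ≠ ∞ := ne_top_of_le_ne_top (ENNReal.mul_ne_top (by simp) hw) h
  lift u to ℝ≥0 using (ENNReal.add_ne_top.1 huv).1
  lift v to ℝ≥0 using (ENNReal.add_ne_top.1 huv).2
  lift w to ℝ≥0 using hw
  norm_cast at h ⊢
  rw [← NNReal.coe_le_coe] at h ⊢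
  push_cast at h ⊢
  nlinarith [sq_nonneg ((u : ℝ) - v)]

theorem ENNReal.min_mul_min_le_sq {u v w : ℝ≥0∞} (h : u * v ≤ w ^ 2) (n : ℝ≥0∞) :
    min u n * min v n ≤ min w n ^ 2 := by
  rcases le_total w n with hw | hw
  · rw [min_eq_left hw]
    exact (mul_le_mul' (min_le_left _ _) (min_le_left _ _)).trans h
  · rw [min_eq_right hw, sq]
    exact mul_le_mul' (min_le_right _ _) (min_le_right _ _)

theorem lintegral_eq_setLIntegral_measure_lt {α : Type*} [MeasurableSpace α] {μ : Measure α}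
    {F : α → ℝ≥0∞} (hF : Measurable F) (hF_ne_top : ∀ x, F x ≠ ∞) :
    ∫⁻ x, F x ∂μ = ∫⁻ t in Ioi 0, μ {x | ENNReal.ofReal t < F x} := by
  have hlayer := lintegral_eq_lintegral_meas_lt μ (.of_forall fun x => ENNReal.toReal_nonneg)
    hF.ennreal_toReal.aemeasurable
  simp only [ENNReal.ofReal_toReal (hF_ne_top _)] at hlayer
  rw [hlayer]
  refine setLIntegral_congr_fun measurableSet_Ioi fun t ht => ?_
  simp only [ENNReal.ofReal_lt_iff_lt_toReal (le_of_lt ht) (hF_ne_top _)]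

theorem lintegral_eq_iSup_lintegral_min_natCast {α : Type*} [MeasurableSpace α] {μ : Measure α}
    {F : α → ℝ≥0∞} (hF : Measurable F) :
    ∫⁻ x, F x ∂μ = ⨆ n : ℕ, ∫⁻ x, min (F x) n ∂μ := by
  rw [← lintegral_iSup (fun n => hF.min measurable_const) fun m n hmn x => by gcongr]
  congr with x
  rw [← inf_iSup_eq, ENNReal.iSup_natCast, inf_top_eq]

theorem Fin.insertNth_smul_add_smul {R M : Type*} [Semiring R] [AddCommMonoid M] [Module R M]
    {n : ℕ} (i : Fin (n + 1)) (a b : R) (t s : M) (x y : Fin n → M) :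
    i.insertNth (α := fun _ => M) (a • t + b • s) (a • x + b • y) =
      a • i.insertNth (α := fun _ => M) t x + b • i.insertNth (α := fun _ => M) s y := by
  funext j
  refine i.succAboveCases ?_ (fun j => ?_) j <;> simp

namespace Real

/-- The translates `K + sInf L` and `sSup K + L` lie in `K + L` and meet in at most one point. -/
theorem volume_add_volume_le_volume_add_of_isCompact {K L : Set ℝ} (hK : IsCompact K)
    (hL : IsCompact L) (hK₀ : K.Nonempty) (hL₀ : L.Nonempty) :
    volume K + volume L ≤ volume (K + L) := by
  set a := sSup K
  set b := sInf L
  have ha : a ∈ K := hK.sSup_mem hK₀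
  have hb : b ∈ L := hL.sInf_mem hL₀
  have hinter : (K + {b}) ∩ ({a} + L) ⊆ {a + b} := by
    rintro _ ⟨⟨x, hx, _, rfl, rfl⟩, ⟨_, rfl, y, hy, hxy⟩⟩
    have := le_csSup hK.bddAbove hx
    have := csInf_le hL.bddBelow hy
    simp only [mem_singleton_iff]
    linarith
  calc volume K + volume L = volume (K + {b}) + volume ({a} + L) := by
        simp [singleton_add, add_singleton, image_add_left, image_add_right]
    _ = volume ((K + {b}) ∪ ({a} + L)) + volume ((K + {b}) ∩ ({a} + L)) :=
        (measure_union_add_inter₀ _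
          (isCompact_singleton.add hL).measurableSet.nullMeasurableSet).symm
    _ ≤ volume (K + L) + 0 := by
        gcongr
        · exact union_subset (add_subset_add_left (singleton_subset_iff.2 hb))
            (add_subset_add_right (singleton_subset_iff.2 ha))
        · exact (measure_mono hinter).trans_eq volume_singleton
    _ = volume (K + L) := add_zero _

theorem volume_add_volume_le_volume_add {A B : Set ℝ} (hA : MeasurableSet A)
    (hB : MeasurableSet B) (hA₀ : A.Nonempty) (hB₀ : B.Nonempty) :
    volume A + volume B ≤ volume (A + B) := by
  obtain ⟨a, ha⟩ := hA₀
  obtain ⟨b, hb⟩ := hB₀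
  rw [hA.measure_eq_iSup_isCompact, hB.measure_eq_iSup_isCompact]
  simp_rw [iSup_and']
  refine ENNReal.biSup_add_biSup_le' ⟨∅, empty_subset _, isCompact_empty⟩
    ⟨∅, empty_subset _, isCompact_empty⟩ fun K ⟨hKA, hK⟩ L ⟨hLB, hL⟩ => ?_
  calc volume K + volume L ≤ volume (insert a K) + volume (insert b L) := by
        gcongr <;> exact subset_insert _ _
    _ ≤ volume (insert a K + insert b L) :=
        volume_add_volume_le_volume_add_of_isCompact (hK.insert a) (hL.insert b)
          (insert_nonempty a K) (insert_nonempty b L)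
    _ ≤ volume (A + B) := by
        gcongr
        · exact insert_subset ha hKA
        · exact insert_subset hb hLB

/-- `F` and `G` have the same supremum, so their superlevel sets are nonempty for the same levels,
and for those levels Brunn–Minkowski applies. -/
theorem volume_lt_add_volume_lt_le_two_mul_volume_lt {F G H : ℝ → ℝ≥0∞} (hF : Measurable F)
    (hG : Measurable G) (hsup : ⨆ x, F x = ⨆ y, G y)
    (hFGH : ∀ x y, min (F x) (G y) ≤ H ((2⁻¹ : ℝ) • (x + y))) (s : ℝ≥0∞) :
    volume {x | s < F x} + volume {y | s < G y} ≤ 2 * volume {z | s < H z} := by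
  by_cases hs : s < ⨆ x, F x
  · have hF₀ : {x | s < F x}.Nonempty := lt_iSup_iff.1 hs
    have hG₀ : {y | s < G y}.Nonempty := lt_iSup_iff.1 (hsup ▸ hs : s < ⨆ y, G y)
    have hmid : (2⁻¹ : ℝ) • ({x | s < F x} + {y | s < G y}) ⊆ {z | s < H z} := by
      rintro _ ⟨_, ⟨x, hx, y, hy, rfl⟩, rfl⟩
      exact (lt_min hx hy).trans_le (hFGH x y)
    calc volume {x | s < F x} + volume {y | s < G y}
        ≤ volume ({x | s < F x} + {y | s < G y}) :=
          volume_add_volume_le_volume_add (measurableSet_lt measurable_const hF)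
            (measurableSet_lt measurable_const hG) hF₀ hG₀
      _ = 2 * volume ((2⁻¹ : ℝ) • ({x | s < F x} + {y | s < G y})) := by
          rw [Measure.addHaar_smul, Module.finrank_self, pow_one, ← mul_assoc,
            abs_of_pos (by norm_num), ENNReal.ofReal_inv_of_pos two_pos, ENNReal.ofReal_ofNat,
            ENNReal.mul_inv_cancel two_ne_zero ENNReal.ofNat_ne_top, one_mul]
      _ ≤ 2 * volume {z | s < H z} := by gcongr
  · have hempty : ∀ {f : ℝ → ℝ≥0∞}, (∀ x, f x ≤ ⨆ x, F x) → {x | s < f x} = ∅ :=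
      fun hf => eq_empty_of_forall_notMem fun x hx => hs (hx.trans_le (hf x))
    rw [hempty (le_iSup F), hempty fun y => hsup ▸ le_iSup G y]
    simp

theorem lintegral_add_lintegral_le_two_mul_of_iSup_eq {F G H : ℝ → ℝ≥0∞} (hF : Measurable F)
    (hG : Measurable G) (hH : Measurable H) (hsup : ⨆ x, F x = ⨆ y, G y)
    (hsup_ne_top : ⨆ x, F x ≠ ∞) (hH_ne_top : ∀ z, H z ≠ ∞)
    (hFGH : ∀ x y, min (F x) (G y) ≤ H ((2⁻¹ : ℝ) • (x + y))) :
    (∫⁻ x, F x) + ∫⁻ y, G y ≤ 2 * ∫⁻ z, H z := by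
  have hF_ne_top x : F x ≠ ∞ := ne_top_of_le_ne_top hsup_ne_top (le_iSup F x)
  have hG_ne_top y : G y ≠ ∞ := ne_top_of_le_ne_top (hsup ▸ hsup_ne_top) (le_iSup G y)
  rw [lintegral_eq_setLIntegral_measure_lt hF hF_ne_top,
    lintegral_eq_setLIntegral_measure_lt hG hG_ne_top,
    lintegral_eq_setLIntegral_measure_lt hH hH_ne_top, ← lintegral_const_mul' _ _ (by simp)]
  exact (le_lintegral_add _ _).trans
    (lintegral_mono fun t => volume_lt_add_volume_lt_le_two_mul_volume_lt hF hG hsup hFGH _)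

/-- Rescaling `F` by `c⁻¹` and `G` by `c`, with `c² = sup F / sup G`, equalizes the suprema
without changing the products `F x * G y`. -/
theorem lintegral_mul_lintegral_le_sq_of_iSup_ne_top {F G H : ℝ → ℝ≥0∞} (hF : Measurable F)
    (hG : Measurable G) (hH : Measurable H) (hF_top : ⨆ x, F x ≠ ∞) (hG_top : ⨆ y, G y ≠ ∞)
    (hH_ne_top : ∀ z, H z ≠ ∞) (hFGH : ∀ x y, F x * G y ≤ H ((2⁻¹ : ℝ) • (x + y)) ^ 2) :
    (∫⁻ x, F x) * ∫⁻ y, G y ≤ (∫⁻ z, H z) ^ 2 := by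
  rcases eq_or_ne (⨆ x, F x) 0 with hF₀ | hF₀
  · simp [ENNReal.iSup_eq_zero.1 hF₀]
  rcases eq_or_ne (⨆ y, G y) 0 with hG₀ | hG₀
  · simp [ENNReal.iSup_eq_zero.1 hG₀]
  obtain ⟨a, ha⟩ : ∃ a : ℝ≥0, (a : ℝ≥0∞) = ⨆ x, F x := ⟨_, ENNReal.coe_toNNReal hF_top⟩
  obtain ⟨b, hb⟩ : ∃ b : ℝ≥0, (b : ℝ≥0∞) = ⨆ y, G y := ⟨_, ENNReal.coe_toNNReal hG_top⟩
  have ha₀ : a ≠ 0 := by rintro rfl; exact hF₀ (by simp [← ha])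
  have hb₀ : b ≠ 0 := by rintro rfl; exact hG₀ (by simp [← hb])
  set c := NNReal.sqrt (a / b)
  have hc₀ : c ≠ 0 := by simp [c, ha₀, hb₀]
  have hc : c * c * b = a := by rw [NNReal.mul_self_sqrt, div_mul_cancel₀ _ hb₀]
  have hsup_F : ⨆ x, (c : ℝ≥0∞)⁻¹ * F x = ↑(c⁻¹ * a) := by
    rw [← ENNReal.mul_iSup, ← ha, ← ENNReal.coe_inv hc₀, ENNReal.coe_mul]
  have hsup : ⨆ x, (c : ℝ≥0∞)⁻¹ * F x = ⨆ y, (c : ℝ≥0∞) * G y := by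
    rw [hsup_F, ← ENNReal.mul_iSup, ← hb, ← hc, mul_assoc, inv_mul_cancel_left₀ hc₀]
    norm_cast
  have hprod (u v : ℝ≥0∞) : (c : ℝ≥0∞)⁻¹ * u * (c * v) = u * v := by
    rw [mul_mul_mul_comm, ENNReal.inv_mul_cancel (by simpa using hc₀) ENNReal.coe_ne_top,
      one_mul]
  have hmin : ∀ x y, min ((c : ℝ≥0∞)⁻¹ * F x) (c * G y) ≤ H ((2⁻¹ : ℝ) • (x + y)) :=
    fun x y => (ENNReal.pow_le_pow_left_iff two_ne_zero).1 <| calc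
      _ ≤ (c : ℝ≥0∞)⁻¹ * F x * (c * G y) := by
        rw [sq]; exact mul_le_mul' (min_le_left _ _) (min_le_right _ _)
      _ ≤ _ := (hprod _ _).trans_le (hFGH x y)
  have hadd := lintegral_add_lintegral_le_two_mul_of_iSup_eq (hF.const_mul _) (hG.const_mul _)
    hH hsup (hsup_F ▸ ENNReal.coe_ne_top) hH_ne_top hmin
  rw [lintegral_const_mul _ hF, lintegral_const_mul _ hG] at hadd
  exact (hprod _ _).symm.trans_le (ENNReal.mul_le_sq_of_add_le_two_mul hadd)

theorem lintegral_mul_lintegral_le_sq_of_le_sq_midpoint {F G H : ℝ → ℝ≥0∞}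
    (hF : Measurable F) (hG : Measurable G) (hH : Measurable H)
    (hFGH : ∀ x y, F x * G y ≤ H ((2⁻¹ : ℝ) • (x + y)) ^ 2) :
    (∫⁻ x, F x) * ∫⁻ y, G y ≤ (∫⁻ z, H z) ^ 2 := by
  have htrunc (n : ℕ) : (∫⁻ x, min (F x) n) * ∫⁻ y, min (G y) n ≤ (∫⁻ z, H z) ^ 2 := by
    have hle {f : ℝ → ℝ≥0∞} : ⨆ x, min (f x) n ≠ ∞ :=
      ne_top_of_le_ne_top (ENNReal.natCast_ne_top n) (iSup_le fun _ => min_le_right _ _)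
    refine (lintegral_mul_lintegral_le_sq_of_iSup_ne_top (hF.min measurable_const)
      (hG.min measurable_const) (hH.min measurable_const) hle hle
      (fun z => ne_top_of_le_ne_top (ENNReal.natCast_ne_top n) (min_le_right _ _))
      fun x y => ENNReal.min_mul_min_le_sq (hFGH x y) n).trans ?_
    gcongr
    exact min_le_left _ _
  rw [lintegral_eq_iSup_lintegral_min_natCast hF, lintegral_eq_iSup_lintegral_min_natCast hG,
    ENNReal.iSup_mul]
  refine iSup_le fun m => ?_
  rw [ENNReal.mul_iSup]
  refine iSup_le fun n => le_trans ?_ (htrunc (max m n))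
  gcongr
  · exact le_max_left m n
  · exact le_max_right m n

end Real

/-- Prékopa–Leindler, by induction on `n`: the hypothesis passes to the marginals
`t ↦ ∫⁻ y, F (insertNth 0 t y)`, to which the one-dimensional case applies. -/
theorem lintegral_mul_lintegral_le_sq_of_le_sq_midpoint :
    ∀ {n : ℕ} {F G H : (Fin n → ℝ) → ℝ≥0∞}, Measurable F → Measurable G → Measurable H →
      (∀ x y, F x * G y ≤ H ((2⁻¹ : ℝ) • (x + y)) ^ 2) →
      (∫⁻ x, F x) * ∫⁻ y, G y ≤ (∫⁻ z, H z) ^ 2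
  | 0, F, G, H, _, _, _, hFGH => by
    have hpoint (f : (Fin 0 → ℝ) → ℝ≥0∞) : ∫⁻ x, f x = f default := by
      simp only [lintegral_unique, volume_pi, Measure.pi_univ, Finset.univ_eq_empty,
        Finset.prod_empty, mul_one]
      exact congrArg f (Subsingleton.elim _ _)
    rw [hpoint, hpoint, hpoint]
    simpa only [Subsingleton.elim _ (default : Fin 0 → ℝ)] using hFGH default default
  | n + 1, F, G, H, hF, hG, hH, hFGH => by
    let e := MeasurableEquiv.piFinSuccAbove (fun _ : Fin (n + 1) => ℝ) 0
    have hmarg {f : (Fin (n + 1) → ℝ) → ℝ≥0∞} (hf : Measurable f) :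
        ∫⁻ x, f x = ∫⁻ t, ∫⁻ y, f (Fin.insertNth 0 t y) := by
      rw [← ((volume_preserving_piFinSuccAbove (fun _ => ℝ) 0).symm e).lintegral_comp hf,
        Measure.volume_eq_prod]
      exact lintegral_prod _ (hf.comp e.symm.measurable).aemeasurable
    have hslice {f : (Fin (n + 1) → ℝ) → ℝ≥0∞} (hf : Measurable f) (t : ℝ) :
        Measurable fun y => f (Fin.insertNth 0 t y) :=
      (hf.comp e.symm.measurable).comp measurable_prodMk_left
    have hmarg_meas {f : (Fin (n + 1) → ℝ) → ℝ≥0∞} (hf : Measurable f) :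
        Measurable fun t => ∫⁻ y, f (Fin.insertNth 0 t y) :=
      (hf.comp e.symm.measurable).lintegral_prod_right'
    rw [hmarg hF, hmarg hG, hmarg hH]
    refine Real.lintegral_mul_lintegral_le_sq_of_le_sq_midpoint (hmarg_meas hF) (hmarg_meas hG)
      (hmarg_meas hH) fun t s => lintegral_mul_lintegral_le_sq_of_le_sq_midpoint
        (hslice hF t) (hslice hG s) (hslice hH _) fun x y => ?_
    simpa only [smul_add, Fin.insertNth_smul_add_smul] using
      hFGH (Fin.insertNth 0 t x) (Fin.insertNth 0 s y)

theorem volume_mul_volume_le_sq_of_midpoint_mem {n : ℕ} {A B S : Set (Fin n → ℝ)}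
    (hA : MeasurableSet A) (hB : MeasurableSet B)
    (hABS : ∀ x ∈ A, ∀ y ∈ B, (2⁻¹ : ℝ) • (x + y) ∈ S) :
    volume A * volume B ≤ volume S ^ 2 := by
  have hS := measurableSet_toMeasurable volume S
  have hPL := lintegral_mul_lintegral_le_sq_of_le_sq_midpoint (measurable_one.indicator hA)
    (measurable_one.indicator hB) (measurable_one.indicator hS) fun x y => by
      by_cases hx : x ∈ A
      · by_cases hy : y ∈ B
        · simp only [indicator_of_mem hx, indicator_of_mem hy, Pi.one_apply, one_pow, mul_one,
            indicator_of_mem (subset_toMeasurable _ _ (hABS x hx y hy)), le_refl]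
        · simp [hy]
      · simp [hx]
  rwa [lintegral_indicator_one hA, lintegral_indicator_one hB, lintegral_indicator_one hS,
    measure_toMeasurable] at hPL

theorem volume_le_volume_of_half_sub_mem {n : ℕ} {A S : Set (Fin n → ℝ)}
    (hA : NullMeasurableSet A) (hAS : ∀ x ∈ A, ∀ y ∈ A, (2⁻¹ : ℝ) • (x - y) ∈ S) :
    volume A ≤ volume S := by
  obtain ⟨A₀, hA₀A, hA₀, hae⟩ := hA.exists_measurable_subset_ae_eq
  have h := volume_mul_volume_le_sq_of_midpoint_mem hA₀ hA₀.neg fun x hx y hy => by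
    simpa [sub_eq_add_neg] using hAS x (hA₀A hx) (-y) (hA₀A hy)
  rwa [Measure.measure_neg, ← sq, ENNReal.pow_le_pow_left_iff two_ne_zero,
    measure_congr hae] at h

theorem Convex.setOf_insertNth_mem {𝕜 E : Type*} [Semiring 𝕜] [PartialOrder 𝕜]
    [AddCommMonoid E] [Module 𝕜 E] {n : ℕ} {K : Set (Fin (n + 1) → E)} (hK : Convex 𝕜 K)
    (i : Fin (n + 1)) (t : E) : Convex 𝕜 {y | i.insertNth t y ∈ K} :=
  fun y hy z hz a b ha hb hab => by
    have hcombo := hK hy hz ha hb hab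
    rwa [← Fin.insertNth_smul_add_smul, Convex.combo_self hab] at hcombo

theorem volume_le_lintegral_volume_setOf_insertNth_mem {n : ℕ} {K : Set (Fin (n + 1) → ℝ)}
    (hK : NullMeasurableSet K) (i : Fin (n + 1)) :
    volume K ≤ ∫⁻ t, volume {y | i.insertNth t y ∈ K} := by
  obtain ⟨K₀, hK₀K, hK₀, hae⟩ := hK.exists_measurable_subset_ae_eq
  let e := MeasurableEquiv.piFinSuccAbove (fun _ : Fin (n + 1) => ℝ) i
  calc volume K = volume K₀ := (measure_congr hae).symm
    _ = volume (e.symm ⁻¹' K₀) :=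
      (((volume_preserving_piFinSuccAbove _ i).symm e).measure_preimage
        hK₀.nullMeasurableSet).symm
    _ = ∫⁻ t, volume (Prod.mk t ⁻¹' (e.symm ⁻¹' K₀)) := by
      rw [Measure.volume_eq_prod, Measure.prod_apply (hK₀.preimage e.symm.measurable)]
    _ ≤ ∫⁻ t, volume {y | i.insertNth t y ∈ K} :=
      lintegral_mono fun t => measure_mono fun y hy => hK₀K hy

/-- Each slice contains the half-differences of the points of any other slice, so the central one
is the largest by Brunn–Minkowski; and the slices with `|t| > h / 2` are empty. -/
theorem volume_le_ofReal_mul_volume_setOf_insertNth_zero_mem {n : ℕ}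
    {K : Set (Fin (n + 1) → ℝ)} (hconv : Convex ℝ K) (hsymm : ∀ x ∈ K, -x ∈ K)
    (i : Fin (n + 1)) {h : ℝ} (hh : ∀ x ∈ K, 2 * x i ≤ h) :
    volume K ≤ ENNReal.ofReal h * volume {y | i.insertNth 0 y ∈ K} := by
  let slice (t : ℝ) : Set (Fin n → ℝ) := {y | i.insertNth t y ∈ K}
  have hslice_le t : volume (slice t) ≤ volume (slice 0) :=
    volume_le_volume_of_half_sub_mem ((hconv.setOf_insertNth_mem i t).nullMeasurableSet _)
      fun y hy z hz => by
        show i.insertNth 0 ((2⁻¹ : ℝ) • (y - z)) ∈ K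
        convert hconv hy (hsymm _ hz) (by norm_num : (0 : ℝ) ≤ 2⁻¹)
          (by norm_num : (0 : ℝ) ≤ 2⁻¹) (by norm_num) using 1
        ext j
        refine i.succAboveCases ?_ (fun j => ?_) j
        · simp
        · simp; ring
  have hslice_empty t (ht : t ∉ Icc (-(h / 2)) (h / 2)) : slice t = ∅ := by
    refine eq_empty_of_forall_notMem fun y hy => ht ⟨?_, ?_⟩
    · have := hh _ (hsymm _ hy)
      simp only [Pi.neg_apply, Fin.insertNth_apply_same] at this
      linarith
    · have := hh _ hy
      simp only [Fin.insertNth_apply_same] at this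
      linarith
  calc volume K ≤ ∫⁻ t, volume (slice t) :=
        volume_le_lintegral_volume_setOf_insertNth_mem (hconv.nullMeasurableSet _) i
    _ ≤ ∫⁻ t, (Icc (-(h / 2)) (h / 2)).indicator (fun _ => volume (slice 0)) t :=
      lintegral_mono fun t => by
        by_cases ht : t ∈ Icc (-(h / 2)) (h / 2)
        · rw [indicator_of_mem ht]
          exact hslice_le t
        · simp [hslice_empty t ht]
    _ = ENNReal.ofReal h * volume (slice 0) := by
      rw [lintegral_indicator_const measurableSet_Icc, Real.volume_Icc, mul_comm]
      ring_nf

theorem exists_orthonormalBasis_apply_zero_eq {E : Type*} [NormedAddCommGroup E]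
    [InnerProductSpace ℝ E] [FiniteDimensional ℝ E] {n : ℕ} (hE : Module.finrank ℝ E = n + 1)
    {e : E} (he : ‖e‖ = 1) : ∃ b : OrthonormalBasis (Fin (n + 1)) ℝ E, b 0 = e := by
  have horth : Orthonormal ℝ (({0} : Set (Fin (n + 1))).domRestrict fun _ => e) :=
    ⟨fun _ => he, fun i j hij => absurd (Subsingleton.elim i j) hij⟩
  obtain ⟨b, hb⟩ := horth.exists_orthonormalBasis_extension_of_card_eq (by simpa using hE)
  exact ⟨b, hb 0 rfl⟩

theorem OrthonormalBasis.lipschitzWith_repr_comp {ι κ E : Type*} [Fintype ι] [Fintype κ]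
    [NormedAddCommGroup E] [InnerProductSpace ℝ E] (b : OrthonormalBasis ι ℝ E) (σ : κ → ι) :
    LipschitzWith 1 fun x j => b.repr x (σ j) :=
  LipschitzWith.of_dist_le_mul fun x y => by
    rw [NNReal.coe_one, one_mul, ← b.repr.dist_map x y]
    exact (dist_pi_le_iff dist_nonneg).2 fun j => PiLp.dist_apply_le _ _ _

theorem volume_le_hausdorffMeasure_of_subset_image {ι X : Type*} [Fintype ι] [EMetricSpace X]
    [MeasurableSpace X] [BorelSpace X] {f : X → ι → ℝ} (hf : LipschitzWith 1 f)
    {S : Set (ι → ℝ)} {T : Set X} (hST : S ⊆ f '' T) : volume S ≤ μH[Fintype.card ι] T := by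
  rw [← hausdorffMeasure_pi_real]
  calc μH[Fintype.card ι] S ≤ μH[Fintype.card ι] (f '' T) := measure_mono hST
    _ ≤ μH[Fintype.card ι] T := by
      simpa using hf.hausdorffMeasure_image_le (Nat.cast_nonneg (Fintype.card ι)) T

theorem volume_le_thickness_mul_section_general (k : ℕ) (M : Set (EuclideanSpace ℝ (Fin k)))
    (hconv : Convex ℝ M)
    (hsymm : ∀ x ∈ M, -x ∈ M)
    (e : EuclideanSpace ℝ (Fin k)) (he : ‖e‖ = 1)
    (h : ℝ) (hh : IsLUB {r : ℝ | ∃ x ∈ M, r = 2 * (inner ℝ e x : ℝ)} h) :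
    volume M ≤ ENNReal.ofReal h *
      μH[(k : ℝ) - 1] (M ∩ {x : EuclideanSpace ℝ (Fin k) | (inner ℝ e x : ℝ) = 0}) := by
  obtain ⟨n, rfl⟩ : ∃ n, k = n + 1 := Nat.exists_eq_add_one.2 <| Nat.pos_of_ne_zero <| by
    rintro rfl
    simp [Subsingleton.elim e 0] at he
  obtain ⟨b, hb⟩ := exists_orthonormalBasis_apply_zero_eq (n := n) (by simp) he
  let φ : (Fin (n + 1) → ℝ) →ₗ[ℝ] EuclideanSpace ℝ (Fin (n + 1)) :=
    b.repr.symm.toLinearMap ∘ₗ (WithLp.linearEquiv 2 ℝ _).symm.toLinearMap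
  have hφ : MeasurePreserving φ :=
    b.measurePreserving_repr_symm.comp (PiLp.volume_preserving_toLp _)
  have hφ_coord y : inner ℝ e (φ y) = y 0 := by
    simp [φ, ← hb, ← OrthonormalBasis.repr_apply_apply]
  have hK := volume_le_ofReal_mul_volume_setOf_insertNth_zero_mem (hconv.linear_preimage φ)
    (fun y hy => by simpa using hsymm _ hy) 0 fun y hy => hh.1 ⟨_, hy, by rw [hφ_coord]⟩
  rw [hφ.measure_preimage (hconv.nullMeasurableSet _)] at hK
  have hsection : volume {y | Fin.insertNth 0 0 y ∈ φ ⁻¹' M} ≤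
      μH[Fintype.card (Fin n)] (M ∩ {x | inner ℝ e x = 0}) :=
    volume_le_hausdorffMeasure_of_subset_image (b.lipschitzWith_repr_comp (Fin.succAbove 0))
      fun y hy => ⟨φ (Fin.insertNth 0 0 y), ⟨hy, by simp [hφ_coord]⟩, funext fun j => by simp [φ]⟩
  simpa using hK.trans (mul_le_mul_right hsection _)

/-- Lemma 2: the volume of a convex 0-symmetric body is at most its thickness in
direction e times the (k−1)-volume of its central section orthogonal to e. -/
theorem volume_le_thickness_mul_section (k : ℕ) (M : Set (EuclideanSpace ℝ (Fin k)))
    (hconv : Convex ℝ M) (hcomp : IsCompact M) (hint : (interior M).Nonempty)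
    (hsymm : ∀ x ∈ M, -x ∈ M)
    (e : EuclideanSpace ℝ (Fin k)) (he : ‖e‖ = 1)
    (h : ℝ) (hh : IsLUB {r : ℝ | ∃ x ∈ M, r = 2 * (inner ℝ e x : ℝ)} h) :
    volume M ≤ ENNReal.ofReal h *
      μH[(k : ℝ) - 1] (M ∩ {x : EuclideanSpace ℝ (Fin k) | (inner ℝ e x : ℝ) = 0}) :=
  volume_le_thickness_mul_section_general k M hconv hsymm e he h hh
end

section
/- Let n, m be positive integers, d = n + m, and Θ a real n×m matrix. Suppose 0 < U < 1 ≤ X and there exist x ∈ ℤ^m \ {0} and y ∈ ℤ^n with |x|_∞ ≤ X and |Θx − y|_∞ ≤ U. Then there exist x ∈ ℤ^m and y ∈ ℤ^n \ {0} such that |y|_∞ ≤ Y and |ᵗΘ y − x|_∞ ≤ V, where Y = (d−1)·(X^m U^{1−m})^{1/(d−1)} and V = (d−1)·(X^{1−n} U^n)^{1/(d−1)}. -/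
/-!
Put `c = (x, Θx - y) ∈ ℝ^(m+n)` and weight its coordinates by `l = (X, …, X, U, …, U)`, so that
`|c_i| ≤ l_i`. For `v = (x', y') ∈ ℤ^(m+n)` the linear forms `t = (x' - ᵗΘy', y')` have determinant
one and satisfy `c ⬝ t = x ⬝ x' - y ⬝ y' ∈ ℤ`. Let `i₀` maximise `|c_i| / l_i`. If
`X^m U^n < r^(d-1)`, Minkowski's linear forms theorem, applied to the forms `t_i` (`i ≠ i₀`) with
bounds `r / l_i` and to `c ⬝ t` with a bound below one, gives `v ≠ 0` with `c ⬝ t = 0` and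
`|t_i| ≤ r / l_i` for `i ≠ i₀`; the relation `c ⬝ t = 0` and the choice of `i₀` then give
`|t_{i₀}| ≤ (d-1) r / l_{i₀}`. Letting `r` decrease to `C = (X^m U^n)^(1/(d-1))` yields the bounds
`Y = (d-1) C / U` and `V = (d-1) C / X`, since only finitely many `y'` occur. When `V < 1`, `y' = 0`
would force `x' = 0`; when `V ≥ 1`, a unit vector `y'` with `x'` obtained by rounding works.
-/

open Matrix

noncomputable section

open MeasureTheory Module Submodule Filter Topology

lemma exists_ne_zero_int_mem_of_two_pow_lt_volume {ι : Type*} [Fintype ι]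
    {s : Set (ι → ℝ)} (h_symm : ∀ x ∈ s, -x ∈ s) (h_conv : Convex ℝ s)
    (h : 2 ^ Fintype.card ι < volume s) :
    ∃ v : ι → ℤ, v ≠ 0 ∧ (fun i => (v i : ℝ)) ∈ s := by
  let b := Pi.basisFun ℝ ι
  have : Countable (span ℤ (Set.range b)).toAddSubgroup :=
    inferInstanceAs (Countable (span ℤ (Set.range b)))
  have hF : volume (ZSpan.fundamentalDomain b) = 1 := by
    simp [b, ZSpan.fundamentalDomain_pi_basisFun, Real.volume_pi_Ico]
  obtain ⟨w, hw0, hws⟩ := exists_ne_zero_mem_lattice_of_measure_mul_two_pow_lt_measure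
    (ZSpan.isAddFundamentalDomain' b volume) h_symm h_conv
    (by rwa [hF, one_mul, finrank_fintype_fun_eq_card])
  choose v hv using (b.mem_span_iff_repr_mem ℤ (w : ι → ℝ)).mp w.2
  have hwv : (fun i => (v i : ℝ)) = w := funext fun i => by simpa [b] using hv i
  refine ⟨v, fun hv0 => hw0 ?_, hwv ▸ hws⟩
  ext1
  rw [← hwv, hv0]
  exact funext fun _ => Int.cast_zero

lemma volume_toLin'_preimage_Icc {ι : Type*} [Fintype ι] [DecidableEq ι] (A : Matrix ι ι ℝ)
    (hA : A.det ≠ 0) {ρ : ι → ℝ} (hρ : 0 ≤ ρ) :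
    volume (toLin' A ⁻¹' Set.Icc (-ρ) ρ) =
      ENNReal.ofReal (|A.det|⁻¹ * ∏ i, 2 * ρ i) := by
  rw [Measure.addHaar_preimage_linearMap _ (by rwa [LinearMap.det_toLin']), Real.volume_Icc_pi,
    LinearMap.det_toLin', ENNReal.ofReal_mul (by positivity), abs_inv,
    ENNReal.ofReal_prod_of_nonneg fun i _ => mul_nonneg zero_le_two (hρ i)]
  congr 2 with i
  simp only [Pi.neg_apply]
  ring_nf

theorem exists_ne_zero_int_abs_mulVec_le {ι : Type*} [Fintype ι] [DecidableEq ι]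
    (A : Matrix ι ι ℝ) (hA : A.det ≠ 0) {ρ : ι → ℝ} (hρ : ∀ i, 0 < ρ i)
    (h : |A.det| < ∏ i, ρ i) :
    ∃ v : ι → ℤ, v ≠ 0 ∧ ∀ i, |(A *ᵥ fun j => (v j : ℝ)) i| ≤ ρ i := by
  have hvol : 2 ^ Fintype.card ι < volume (toLin' A ⁻¹' Set.Icc (-ρ) ρ) := by
    rw [volume_toLin'_preimage_Icc A hA fun i => (hρ i).le, Finset.prod_mul_distrib,
      Finset.prod_const, Finset.card_univ, ← ENNReal.ofReal_ofNat 2,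
      ← ENNReal.ofReal_pow zero_le_two]
    refine (ENNReal.ofReal_lt_ofReal_iff_of_nonneg (by positivity)).mpr ?_
    rw [inv_mul_eq_div, lt_div_iff₀ (abs_pos.mpr hA)]
    exact mul_lt_mul_of_pos_left h (pow_pos two_pos _)
  obtain ⟨v, hv0, hv⟩ := exists_ne_zero_int_mem_of_two_pow_lt_volume
    (fun x hx => by
      rw [Set.mem_preimage, map_neg, Set.mem_Icc, neg_le_neg_iff, _root_.neg_le]
      exact hx.symm)
    ((convex_Icc _ _).linear_preimage _) hvol
  exact ⟨v, hv0, fun i => abs_le.mpr ⟨hv.1 i, hv.2 i⟩⟩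

theorem exists_int_dotProduct_mulVec_eq_zero {ι : Type*} [Fintype ι] [DecidableEq ι]
    (B : Matrix ι ι ℝ) (hB : B.det = 1) {c : ι → ℝ} {w : ι → ℤ}
    (hw : c ᵥ* B = fun i => (w i : ℝ)) {i₀ : ι} (hci₀ : c i₀ ≠ 0) {ρ : ι → ℝ}
    (hρ : ∀ i, 0 < ρ i) (h : |c i₀| < ∏ i ∈ Finset.univ.erase i₀, ρ i) :
    ∃ v : ι → ℤ, v ≠ 0 ∧ c ⬝ᵥ (B *ᵥ fun j => (v j : ℝ)) = 0 ∧
      ∀ i ≠ i₀, |(B *ᵥ fun j => (v j : ℝ)) i| ≤ ρ i := by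
  have hprod : 0 < ∏ i ∈ Finset.univ.erase i₀, ρ i := Finset.prod_pos fun i _ => hρ i
  obtain ⟨r, hr, hr1⟩ := exists_between ((div_lt_one hprod).mpr h)
  have hr0 : 0 < r := (div_nonneg (abs_nonneg _) hprod.le).trans_lt hr
  have hdet : (B.updateRow i₀ (c ᵥ* B)).det = c i₀ := by
    rw [vecMul_eq_sum, det_updateRow_sum, hB, smul_eq_mul, mul_one]
  -- the integer-valued form `c ⬝ᵥ B *ᵥ v` gets a bound `r < 1`, which forces it to vanish
  obtain ⟨v, hv0, hv⟩ := exists_ne_zero_int_abs_mulVec_le (B.updateRow i₀ (c ᵥ* B))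
    (hdet ▸ hci₀) (ρ := Function.update ρ i₀ r)
    (fun i => by
      rcases eq_or_ne i i₀ with rfl | hi
      · simpa using hr0
      · simpa [hi] using hρ i)
    (by rw [hdet, Finset.prod_update_of_mem (Finset.mem_univ _),
          Finset.sdiff_singleton_eq_erase]
        exact (div_lt_iff₀ hprod).mp hr)
  refine ⟨v, hv0, ?_, fun i hi => ?_⟩
  · have hwv : c ⬝ᵥ (B *ᵥ fun j => (v j : ℝ)) = ((w ⬝ᵥ v : ℤ) : ℝ) := by
      rw [dotProduct_mulVec, hw]
      push_cast [dotProduct]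
      rfl
    have hi₀ := hv i₀
    rw [updateRow_mulVec, Function.update_self, Function.update_self, ← dotProduct_mulVec,
      hwv, ← Int.cast_abs] at hi₀
    have : |w ⬝ᵥ v| < 1 := by exact_mod_cast hi₀.trans_lt hr1
    rw [hwv, Int.abs_lt_one_iff.mp this, Int.cast_zero]
  · simpa [updateRow_mulVec, hi] using hv i

lemma exists_max_abs_div {ι : Type*} [Finite ι] {c : ι → ℝ} (hc : c ≠ 0) {l : ι → ℝ}
    (hl : ∀ i, 0 < l i) :
    ∃ i₀, c i₀ ≠ 0 ∧ ∀ i, |c i| / l i ≤ |c i₀| / l i₀ := by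
  obtain ⟨j, hj⟩ := Function.ne_iff.mp hc
  have : Nonempty ι := ⟨j⟩
  obtain ⟨i₀, hi₀⟩ := Finite.exists_max fun i => |c i| / l i
  refine ⟨i₀, fun h => hj (abs_nonpos_iff.mp ?_), hi₀⟩
  simpa [h] using (div_le_iff₀ (hl j)).mp (hi₀ j)

lemma abs_le_of_dotProduct_eq_zero {ι : Type*} [Fintype ι] [DecidableEq ι] {c t l : ι → ℝ}
    {i₀ : ι} {D : ℝ} (hl : ∀ i, 0 < l i) (hmax : ∀ i, |c i| / l i ≤ |c i₀| / l i₀)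
    (hci₀ : c i₀ ≠ 0) (hct : c ⬝ᵥ t = 0) (ht : ∀ i ≠ i₀, |t i| ≤ D / l i) :
    |t i₀| ≤ (Fintype.card ι - 1 : ℕ) * D / l i₀ := by
  have hsplit : c i₀ * t i₀ = -∑ i ∈ Finset.univ.erase i₀, c i * t i := by
    rw [eq_neg_iff_add_eq_zero,
      Finset.add_sum_erase _ (fun i => c i * t i) (Finset.mem_univ i₀)]
    exact hct
  have hterm : ∀ i ∈ Finset.univ.erase i₀, |c i * t i| ≤ |c i₀| * (D / l i₀) := by
    intro i hi
    have hci : |c i| ≤ |c i₀| / l i₀ * l i := (div_le_iff₀ (hl i)).mp (hmax i)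
    calc |c i * t i| = |c i| * |t i| := abs_mul _ _
      _ ≤ |c i₀| / l i₀ * l i * (D / l i) :=
        mul_le_mul hci (ht i (Finset.ne_of_mem_erase hi)) (abs_nonneg _)
          (mul_nonneg (div_nonneg (abs_nonneg _) (hl i₀).le) (hl i).le)
      _ = |c i₀| * (D / l i₀) := by field_simp [(hl i).ne']
  have key : |c i₀| * |t i₀| ≤ |c i₀| * ((Fintype.card ι - 1 : ℕ) * D / l i₀) := by
    calc |c i₀| * |t i₀| = |∑ i ∈ Finset.univ.erase i₀, c i * t i| := by
          rw [← abs_mul, hsplit, abs_neg]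
      _ ≤ ∑ i ∈ Finset.univ.erase i₀, |c i * t i| := Finset.abs_sum_le_sum_abs _ _
      _ ≤ ∑ i ∈ Finset.univ.erase i₀, |c i₀| * (D / l i₀) := Finset.sum_le_sum hterm
      _ = |c i₀| * ((Fintype.card ι - 1 : ℕ) * D / l i₀) := by
          rw [Finset.sum_const, Finset.card_erase_of_mem (Finset.mem_univ _), Finset.card_univ,
            nsmul_eq_mul]
          ring
  exact le_of_mul_le_mul_left key (abs_pos.mpr hci₀)

lemma lt_prod_erase_div {ι : Type*} [Fintype ι] [DecidableEq ι] {l : ι → ℝ}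
    (hl : ∀ i, 0 < l i) {a r : ℝ} {i₀ : ι} (ha : a ≤ l i₀)
    (h : ∏ i, l i < r ^ (Fintype.card ι - 1)) :
    a < ∏ i ∈ Finset.univ.erase i₀, r / l i := by
  have hpos : 0 < ∏ i ∈ Finset.univ.erase i₀, l i := Finset.prod_pos fun i _ => hl i
  rw [Finset.prod_div_distrib, Finset.prod_const, Finset.card_erase_of_mem (Finset.mem_univ _),
    Finset.card_univ, lt_div_iff₀ hpos]
  calc a * ∏ i ∈ Finset.univ.erase i₀, l i
      ≤ l i₀ * ∏ i ∈ Finset.univ.erase i₀, l i := mul_le_mul_of_nonneg_right ha hpos.le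
    _ = ∏ i, l i := Finset.mul_prod_erase _ _ (Finset.mem_univ _)
    _ < r ^ (Fintype.card ι - 1) := h

theorem exists_ne_zero_int_abs_mulVec_le_of_vecMul_eq {ι : Type*} [Fintype ι] [DecidableEq ι]
    (hι : 2 ≤ Fintype.card ι) (B : Matrix ι ι ℝ) (hB : B.det = 1) {c : ι → ℝ} (hc : c ≠ 0)
    {w : ι → ℤ} (hw : c ᵥ* B = fun i => (w i : ℝ)) {l : ι → ℝ} (hl : ∀ i, 0 < l i)
    (hcl : ∀ i, |c i| ≤ l i) {r : ℝ} (hr : 0 < r) (h : ∏ i, l i < r ^ (Fintype.card ι - 1)) :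
    ∃ v : ι → ℤ, v ≠ 0 ∧
      ∀ i, |(B *ᵥ fun j => (v j : ℝ)) i| ≤ (Fintype.card ι - 1 : ℕ) * r / l i := by
  obtain ⟨i₀, hci₀, hmax⟩ := exists_max_abs_div hc hl
  obtain ⟨v, hv0, hdot, hv⟩ := exists_int_dotProduct_mulVec_eq_zero B hB hw hci₀
    (fun i => div_pos hr (hl i)) (lt_prod_erase_div hl (hcl i₀) h)
  refine ⟨v, hv0, fun i => ?_⟩
  rcases eq_or_ne i i₀ with rfl | hi
  · exact abs_le_of_dotProduct_eq_zero hl hmax hci₀ hdot hv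
  · refine (hv i hi).trans (div_le_div_of_nonneg_right (le_mul_of_one_le_left hr.le ?_) (hl i).le)
    exact_mod_cast (by omega : 1 ≤ Fintype.card ι - 1)

lemma eq_zero_of_norm_ivec_lt_one {k : ℕ} {z : Fin k → ℤ} (h : ‖ivec z‖ < 1) : z = 0 :=
  funext fun i => Int.abs_lt_one_iff.mp <| by
    have := (norm_le_pi_norm (ivec z) i).trans_lt h
    rw [Real.norm_eq_abs, ivec, ← Int.cast_abs] at this
    exact_mod_cast this

lemma finite_setOf_norm_ivec_le (k : ℕ) (R : ℝ) :
    {z : Fin k → ℤ | ‖ivec z‖ ≤ R}.Finite := by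
  refine (isCompact_closedBall (0 : Fin k → ℤ) R).finite_of_discrete.subset fun z hz => ?_
  rw [Metric.mem_closedBall, dist_zero_right]
  refine (pi_norm_le_iff_of_nonneg ((norm_nonneg _).trans hz)).mpr fun i => ?_
  rw [← Int.norm_cast_real]
  exact (norm_le_pi_norm (ivec z) i).trans hz

lemma norm_sub_ivec_round_le {k : ℕ} (a : Fin k → ℝ) (z : Fin k → ℤ) :
    ‖a - ivec (fun i => round (a i))‖ ≤ ‖a - ivec z‖ :=
  (pi_norm_le_iff_of_nonneg (norm_nonneg _)).mpr fun i =>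
    (round_le (a i) (z i)).trans (norm_le_pi_norm (a - ivec z) i)

lemma norm_sub_ivec_round_le_half {k : ℕ} (a : Fin k → ℝ) :
    ‖a - ivec (fun i => round (a i))‖ ≤ 1 / 2 :=
  (pi_norm_le_iff_of_nonneg (by norm_num)).mpr fun i => abs_sub_round (a i)

lemma exists_of_eventually_of_finite_of_isClosed {α X : Type*} [TopologicalSpace X]
    {l : Filter X} [l.NeBot] {x₀ : X} (hl : l ≤ 𝓝 x₀) {S : Set α} (hS : S.Finite)
    {P : X → α → Prop} (hP : ∀ a ∈ S, IsClosed {x | P x a})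
    (h : ∀ᶠ x in l, ∃ a ∈ S, P x a) :
    ∃ a ∈ S, P x₀ a := by
  simpa only [Set.mem_iUnion₂, exists_prop, Set.mem_ofPred_eq] using
    (hS.isClosed_biUnion hP).mem_of_tendsto (tendsto_id.mono_left hl)
      (h.mono fun x hx => by simpa only [Set.mem_iUnion₂, exists_prop])

section Transference

variable {m n : ℕ} (Θ : Matrix (Fin n) (Fin m) ℝ)

def transferenceMatrix : Matrix (Fin m ⊕ Fin n) (Fin m ⊕ Fin n) ℝ := fromBlocks 1 (-Θᵀ) 0 1

lemma det_transferenceMatrix : (transferenceMatrix Θ).det = 1 := by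
  rw [transferenceMatrix, det_fromBlocks_zero₂₁, det_one, det_one, mul_one]

lemma transferenceMatrix_mulVec (a : Fin m → ℝ) (b : Fin n → ℝ) :
    transferenceMatrix Θ *ᵥ Sum.elim a b = Sum.elim (a - Θᵀ *ᵥ b) b := by
  simp only [transferenceMatrix, fromBlocks_mulVec, Sum.elim_comp_inl, one_mulVec,
    Sum.elim_comp_inr, neg_mulVec, zero_mulVec, zero_add, sub_eq_add_neg]

lemma vecMul_transferenceMatrix (a : Fin m → ℝ) (b : Fin n → ℝ) :
    Sum.elim a (Θ *ᵥ a - b) ᵥ* transferenceMatrix Θ = Sum.elim a (-b) := by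
  simp only [transferenceMatrix, vecMul_fromBlocks, Sum.elim_comp_inl, vecMul_one,
    Sum.elim_comp_inr, vecMul_zero, add_zero, vecMul_neg, vecMul_transpose, neg_add_eq_sub,
    sub_sub_cancel_left]

lemma intCast_sumElim (a : Fin m → ℤ) (b : Fin n → ℤ) :
    (fun i => ((Sum.elim a b i : ℤ) : ℝ)) = Sum.elim (ivec a) (ivec b) := by
  ext (i | i) <;> rfl

theorem exists_dual_approx_of_lt_pow (hm : 0 < m) (hn : 0 < n) {X U r : ℝ} (hX : 0 < X)
    (hU : 0 < U) (hr : 0 < r) (hXU : X ^ m * U ^ n < r ^ (m + n - 1))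
    {x : Fin m → ℤ} {y : Fin n → ℤ} (hx : x ≠ 0) (h1 : ‖ivec x‖ ≤ X)
    (h2 : ‖Θ *ᵥ ivec x - ivec y‖ ≤ U) :
    ∃ x' : Fin m → ℤ, ∃ y' : Fin n → ℤ, Sum.elim x' y' ≠ 0 ∧
      ‖ivec y'‖ ≤ (m + n - 1 : ℕ) * r / U ∧
      ‖Θᵀ *ᵥ ivec y' - ivec x'‖ ≤ (m + n - 1 : ℕ) * r / X := by
  set l : Fin m ⊕ Fin n → ℝ := Sum.elim (fun _ => X) (fun _ => U)
  have hc : Sum.elim (ivec x) (Θ *ᵥ ivec x - ivec y) ≠ 0 := fun h => hx <| funext fun k => by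
    simpa [ivec] using congrFun h (Sum.inl k)
  have hcl : ∀ i, |Sum.elim (ivec x) (Θ *ᵥ ivec x - ivec y) i| ≤ l i := by
    rintro (k | j)
    · exact (norm_le_pi_norm _ k).trans h1
    · exact (norm_le_pi_norm _ j).trans h2
  have hprod : ∏ i, l i = X ^ m * U ^ n := by simp [l, Fintype.prod_sum_type]
  obtain ⟨v, hv0, hv⟩ := exists_ne_zero_int_abs_mulVec_le_of_vecMul_eq
    (by rw [Fintype.card_sum, Fintype.card_fin, Fintype.card_fin]; omega)
    (transferenceMatrix Θ) (det_transferenceMatrix Θ) hc (w := Sum.elim x (-y))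
    (by rw [vecMul_transferenceMatrix]; ext (k | j) <;> simp [ivec])
    (by rintro (_ | _) <;> assumption) hcl hr (by simpa [hprod] using hXU)
  rw [← Sum.elim_comp_inl_inr v, intCast_sumElim, transferenceMatrix_mulVec] at hv
  refine ⟨v ∘ Sum.inl, v ∘ Sum.inr, by rwa [Sum.elim_comp_inl_inr], ?_, ?_⟩
  · refine (pi_norm_le_iff_of_nonneg (by positivity)).mpr fun j => ?_
    simpa [l] using hv (Sum.inr j)
  · refine (pi_norm_le_iff_of_nonneg (by positivity)).mpr fun k => ?_
    simpa [l, abs_sub_comm] using hv (Sum.inl k)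

theorem exists_dual_approx_of_pow_eq (hm : 0 < m) (hn : 0 < n) {X U C : ℝ} (hX : 0 < X)
    (hU : 0 < U) (hC : 0 < C) (hCpow : C ^ (m + n - 1) = X ^ m * U ^ n)
    (hV : (m + n - 1 : ℕ) * C / X < 1) {x : Fin m → ℤ} {y : Fin n → ℤ}
    (hx : x ≠ 0) (h1 : ‖ivec x‖ ≤ X) (h2 : ‖Θ *ᵥ ivec x - ivec y‖ ≤ U) :
    ∃ x' : Fin m → ℤ, ∃ y' : Fin n → ℤ, y' ≠ 0 ∧
      ‖ivec y'‖ ≤ (m + n - 1 : ℕ) * C / U ∧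
      ‖Θᵀ *ᵥ ivec y' - ivec x'‖ ≤ (m + n - 1 : ℕ) * C / X := by
  set K : ℝ := ((m + n - 1 : ℕ) : ℝ)
  -- with `x'` obtained by rounding, the condition on `r` depends on `y'` alone and is closed
  let P (r : ℝ) (y' : Fin n → ℤ) : Prop :=
    ‖ivec y'‖ ≤ K * r / U ∧
      ‖Θᵀ *ᵥ ivec y' - ivec (fun k => round ((Θᵀ *ᵥ ivec y') k))‖ ≤ K * r / X
  have hP : ∀ y', IsClosed {r | P r y'} := fun y' =>
    (isClosed_le continuous_const (by fun_prop : Continuous fun r => K * r / U)).inter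
      (isClosed_le continuous_const (by fun_prop : Continuous fun r => K * r / X))
  have hsmall : ∀ᶠ r in 𝓝[>] C, K * r / X < 1 :=
    nhdsWithin_le_nhds <| (by fun_prop : Continuous fun r => K * r / X).continuousAt.eventually_lt
      continuousAt_const hV
  obtain ⟨y', ⟨hy'0, -⟩, hy'⟩ := exists_of_eventually_of_finite_of_isClosed nhdsWithin_le_nhds
    (S := {y' | y' ≠ 0 ∧ ‖ivec y'‖ ≤ X / U})
    ((finite_setOf_norm_ivec_le n (X / U)).subset fun _ h => h.2) (fun y' _ => hP y') <| by
    filter_upwards [self_mem_nhdsWithin, hsmall] with r (hr : C < r) hrX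
    obtain ⟨x', y', hne, hy, hxy⟩ := exists_dual_approx_of_lt_pow Θ hm hn hX hU (hC.trans hr)
      (hCpow ▸ pow_lt_pow_left₀ hr hC.le (by omega)) hx h1 h2
    have hy0 : y' ≠ 0 := by
      rintro rfl
      refine hne ?_
      rw [eq_zero_of_norm_ivec_lt_one (z := x') ?_, Sum.elim_zero_zero]
      have hx' := hxy.trans_lt hrX
      rwa [show ivec (0 : Fin n → ℤ) = 0 from funext fun _ => Int.cast_zero, mulVec_zero,
        zero_sub, norm_neg] at hx'
    refine ⟨y', ⟨hy0, hy.trans ?_⟩, hy, (norm_sub_ivec_round_le _ x').trans hxy⟩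
    exact div_le_div_of_nonneg_right ((div_lt_one hX).mp hrX).le hU.le
  exact ⟨_, y', hy'0, hy'⟩

lemma exists_dual_approx_of_one_le (hn : 0 < n) {Y V : ℝ} (hY : 1 ≤ Y) (hV : 1 / 2 ≤ V) :
    ∃ x' : Fin m → ℤ, ∃ y' : Fin n → ℤ, y' ≠ 0 ∧
      ‖ivec y'‖ ≤ Y ∧ ‖Θᵀ *ᵥ ivec y' - ivec x'‖ ≤ V := by
  refine ⟨_, Pi.single ⟨0, hn⟩ 1, by simp, ?_, (norm_sub_ivec_round_le_half _).trans hV⟩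
  have : ivec (Pi.single ⟨0, hn⟩ 1 : Fin n → ℤ) = Pi.single ⟨0, hn⟩ 1 := by
    ext j
    by_cases hj : j = ⟨0, hn⟩ <;> simp [ivec, hj]
  rwa [this, Pi.norm_single, norm_one]

end Transference

lemma rpow_mul_rpow_one_sub_rpow_one_div (a b : ℕ) {s t : ℝ} (hs : 0 ≤ s) (ht : 0 < t)
    (hab : (b + a : ℝ) - 1 ≠ 0) :
    (s ^ (a : ℝ) * t ^ (1 - (a : ℝ))) ^ (1 / ((b + a : ℝ) - 1)) =
      (s ^ a * t ^ b) ^ (1 / ((b + a : ℝ) - 1)) / t := by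
  have hsplit : s ^ (a : ℝ) * t ^ (1 - (a : ℝ)) = s ^ a * t ^ b / t ^ ((b + a : ℝ) - 1) := by
    rw [Real.rpow_natCast, mul_div_assoc, ← Real.rpow_natCast t b, ← Real.rpow_sub ht]
    ring_nf
  rw [hsplit, Real.div_rpow (by positivity) (by positivity), ← Real.rpow_mul ht.le,
    mul_one_div_cancel hab, Real.rpow_one]

/-- Theorem 1 (Mahler's transference theorem). -/
theorem mahler_transference (n m : ℕ) (hn : 0 < n) (hm : 0 < m)
    (Θ : Matrix (Fin n) (Fin m) ℝ) (X U Y V : ℝ)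
    (hY : Y = ((n + m : ℝ) - 1) * (X ^ (m:ℝ) * U ^ (1 - (m:ℝ))) ^ ((1:ℝ)/((n + m : ℝ) - 1)))
    (hV : V = ((n + m : ℝ) - 1) * (X ^ (1 - (n:ℝ)) * U ^ (n:ℝ)) ^ ((1:ℝ)/((n + m : ℝ) - 1)))
    (hU0 : 0 < U) (hU1 : U < 1) (hX : 1 ≤ X)
    (x : Fin m → ℤ) (y : Fin n → ℤ) (hx : x ≠ 0)
    (h1 : ‖ivec x‖ ≤ X)
    (h2 : ‖Θ.mulVec (ivec x) - ivec y‖ ≤ U) :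
    ∃ x' : Fin m → ℤ, ∃ y' : Fin n → ℤ, y' ≠ 0 ∧
      ‖ivec y'‖ ≤ Y ∧
      ‖(Θᵀ).mulVec (ivec y') - ivec x'‖ ≤ V := by
  have hX0 : 0 < X := zero_lt_one.trans_le hX
  have hD : (n + m : ℝ) - 1 = ((m + n - 1 : ℕ) : ℝ) := by
    push_cast [Nat.cast_sub (by omega : 1 ≤ m + n)]
    ring
  have hD1 : (1 : ℝ) ≤ (n + m : ℝ) - 1 := by
    rw [hD]
    exact_mod_cast (by omega : 1 ≤ m + n - 1)
  set C := (X ^ m * U ^ n) ^ (1 / ((n + m : ℝ) - 1)) with hC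
  rcases lt_or_ge V 1 with hV1 | hV1
  · have hYC : Y = (m + n - 1 : ℕ) * C / U := by
      rw [hY, rpow_mul_rpow_one_sub_rpow_one_div m n hX0.le hU0 (by linarith), ← hC, hD,
        mul_div_assoc]
    have hVC : V = (m + n - 1 : ℕ) * C / X := by
      rw [hV, mul_comm (X ^ _), add_comm (n : ℝ),
        rpow_mul_rpow_one_sub_rpow_one_div n m hU0.le hX0 (by linarith), mul_comm (U ^ n),
        add_comm (m : ℝ), ← hC, hD, mul_div_assoc]
    rw [hYC, hVC]
    refine exists_dual_approx_of_pow_eq Θ hm hn hX0 hU0 (by positivity) ?_ (hVC ▸ hV1) hx h1 h2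
    rw [hC, hD, one_div, Real.rpow_inv_natCast_pow (by positivity) (by omega)]
  · have hbase : 1 ≤ X ^ (m : ℝ) * U ^ (1 - (m : ℝ)) :=
      one_le_mul_of_one_le_of_one_le (Real.one_le_rpow hX m.cast_nonneg)
        (Real.one_le_rpow_of_pos_of_le_one_of_nonpos hU0 hU1.le
          (by rw [sub_nonpos]; exact_mod_cast hm))
    exact exists_dual_approx_of_one_le Θ hn
      (hY ▸ one_le_mul_of_one_le_of_one_le hD1 (Real.one_le_rpow hbase (by positivity)))
      (by linarith)
end
end
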